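/- arXiv:2503.24207 — 5 statements merged into one kernel-verified Lean document; each statement's English description precedes it below -/
import Mathlib

section
/- Let A ∈ E^[∞], and let {B_n : n < ω} ⊆ E^[∞] be such that B_n ≤ A for all n. Then there exists B ∈ E^[∞] with B ≤ A such that B is compatible with B_n for every n (i.e. ⟨B⟩ ∩ ⟨B_n⟩ is infinite-dimensional), and ⟨B⟩ ⊆ span(⋃_{n<ω} ⟨B_n⟩) ⊆ ⟨A⟩. -/
noncomputable section

variable {𝔽 : Type} [Field 𝔽]

/-- The `ℵ₀`-dimensional vector space `E` over `𝔽`, realised as finitely supported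
functions `ℕ →₀ 𝔽`; the fixed basis is `eVec 𝔽 n = Finsupp.single n 1`. -/
abbrev EVec (𝔽 : Type) [Field 𝔽] : Type := ℕ →₀ 𝔽

/-- The basis vector `e n`. -/
def eVec (𝔽 : Type) [Field 𝔽] (n : ℕ) : EVec 𝔽 := Finsupp.single n 1

/-- `x < y` iff `max (supp x) < min (supp y)`, i.e. every element of the support of `x`
is below every element of the support of `y`. -/
def BlockLt (x y : EVec 𝔽) : Prop := ∀ i ∈ x.support, ∀ j ∈ y.support, i < j

/-- An infinite block sequence: a `<`-increasing sequence of nonzero vectors. -/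
def IsBlockSeq (A : ℕ → EVec 𝔽) : Prop :=
  (∀ n, A n ≠ 0) ∧ ∀ m n : ℕ, m < n → BlockLt (A m) (A n)

/-- A finite block sequence (as a list). -/
def IsBlockList (a : List (EVec 𝔽)) : Prop :=
  (∀ x ∈ a, x ≠ 0) ∧ a.Pairwise BlockLt

/-- `⟨A⟩`, the span of (the range of) a block sequence. -/
def spanSeq (A : ℕ → EVec 𝔽) : Submodule 𝔽 (EVec 𝔽) := Submodule.span 𝔽 (Set.range A)

/-- `⟨a⟩`, the span of a finite block sequence. -/
def spanList (a : List (EVec 𝔽)) : Submodule 𝔽 (EVec 𝔽) := Submodule.span 𝔽 {x | x ∈ a}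

/-- `A/N = (x_n)_{n ≥ N}`. -/
def tailSeq (A : ℕ → EVec 𝔽) (N : ℕ) : ℕ → EVec 𝔽 := fun n => A (n + N)

/-- `r_n(A) = (x_0, …, x_{n-1})`. -/
def rApprox (A : ℕ → EVec 𝔽) (n : ℕ) : List (EVec 𝔽) := (List.range n).map A

/-- `A ≤ B` iff `⟨A⟩ ⊆ ⟨B⟩`. -/
def SeqLe (A B : ℕ → EVec 𝔽) : Prop := spanSeq A ≤ spanSeq B

/-- `A ≤* B` iff `A/N ≤ B` for some `N`. -/
def SeqLeStar (A B : ℕ → EVec 𝔽) : Prop := ∃ N, SeqLe (tailSeq A N) B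

/-- `d_A(a)`: the least `N` such that `max (supp a)` lies below (the support of) every
vector of `A/N` (this is `0` when `a` is empty). -/
def depthIn (A : ℕ → EVec 𝔽) (a : List (EVec 𝔽)) : ℕ :=
  sInf {N | ∀ x ∈ a, ∀ k, N ≤ k → BlockLt x (A k)}

/-- `⟨C⟩ ⊆ Y`, understood modulo zero. -/
def SpanSub (C : ℕ → EVec 𝔽) (Y : Set (EVec 𝔽)) : Prop :=
  ∀ x ∈ spanSeq C, x ≠ 0 → x ∈ Y

/-- `Y` is big if `⟨C⟩ ⊆ Y` (mod zero) for some infinite block sequence `C`. -/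
def BigSet (Y : Set (EVec 𝔽)) : Prop := ∃ C, IsBlockSeq C ∧ SpanSub C Y

/-- `Y` is small if it is not big. -/
def SmallSet (Y : Set (EVec 𝔽)) : Prop := ¬ BigSet Y

/-- `Y` is very small if `Y ∪ Z` is small for every small `Z`. -/
def VerySmallSet (Y : Set (EVec 𝔽)) : Prop :=
  ∀ Z : Set (EVec 𝔽), SmallSet Z → SmallSet (Y ∪ Z)

/-- A semicoideal: a `≤*`-upward closed set of infinite block sequences. -/
def Semicoideal (H : Set (ℕ → EVec 𝔽)) : Prop :=
  (∀ A ∈ H, IsBlockSeq A) ∧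
    ∀ A ∈ H, ∀ B : ℕ → EVec 𝔽, IsBlockSeq B → SeqLeStar A B → B ∈ H

/-- `H ↾ A = {B ∈ H : B ≤ A}`. -/
def restrictBelow (H : Set (ℕ → EVec 𝔽)) (A : ℕ → EVec 𝔽) : Set (ℕ → EVec 𝔽) :=
  {B ∈ H | SeqLe B A}

/-- `Y ⊆ E` is `H`-dense below `A`. -/
def HDense (H : Set (ℕ → EVec 𝔽)) (Y : Set (EVec 𝔽)) (A : ℕ → EVec 𝔽) : Prop :=
  ∀ B ∈ restrictBelow H A, ∃ C, IsBlockSeq C ∧ SeqLe C B ∧ SpanSub C Y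

/-- `H` is full. -/
def FullFam (H : Set (ℕ → EVec 𝔽)) : Prop :=
  ∀ Y : Set (EVec 𝔽), ∀ A ∈ H, HDense H Y A → ∃ B ∈ restrictBelow H A, SpanSub B Y

/-- `H` is a coideal. -/
def CoidealFam (H : Set (ℕ → EVec 𝔽)) : Prop :=
  ∀ Y : Set (EVec 𝔽), ∀ A ∈ H, ∃ B ∈ restrictBelow H A, SpanSub B Y ∨ SpanSub B Yᶜ

/-- `B` weakly diagonalises the `≤`-decreasing sequence `As`. -/
def WeakDiag (As : ℕ → ℕ → EVec 𝔽) (B : ℕ → EVec 𝔽) : Prop :=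
  SeqLe B (As 0) ∧ ∀ n, SeqLeStar B (As n)

/-- The (p)-property. -/
def PProp (H : Set (ℕ → EVec 𝔽)) : Prop :=
  ∀ As : ℕ → ℕ → EVec 𝔽, (∀ n, As n ∈ H) → (∀ n, SeqLe (As (n + 1)) (As n)) →
    ∃ B ∈ H, WeakDiag As B

/-- The (q)-property: `lo m`, `hi m` are the endpoints of the finite intervals `I m`. -/
def QProp (H : Set (ℕ → EVec 𝔽)) : Prop :=
  ∀ A ∈ H, ∀ lo hi : ℕ → ℕ, (∀ m, lo m ≤ hi m) → (∀ m, hi m < lo (m + 1)) →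
    ∃ B ∈ restrictBelow H A, ∀ n : ℕ, ∃ m : ℕ,
      spanList (rApprox B n) ≤ spanList (rApprox A (lo m - 1)) ∧
      SeqLe (tailSeq B n) (tailSeq A (hi m))

/-- `B` diagonalises the `≤`-decreasing sequence `As` within `A`. -/
def DiagWithin (A : ℕ → EVec 𝔽) (As : ℕ → ℕ → EVec 𝔽) (B : ℕ → EVec 𝔽) : Prop :=
  SeqLe B A ∧ ∀ n, SeqLe (tailSeq B n) (As (depthIn A (rApprox B n)))

/-- `H` is selective. -/
def SelectiveFam (H : Set (ℕ → EVec 𝔽)) : Prop :=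
  ∀ A ∈ H, ∀ As : ℕ → ℕ → EVec 𝔽, (∀ n, As n ∈ H) →
    (∀ n, SeqLe (As (n + 1)) (As n)) → SeqLe (As 0) A →
    ∃ B ∈ H, DiagWithin A As B

/-- Two subspaces are almost disjoint if their intersection is finite dimensional. -/
def AlmostDisjoint (V W : Submodule 𝔽 (EVec 𝔽)) : Prop :=
  FiniteDimensional 𝔽 ↥(V ⊓ W)

/-- An almost disjoint family of block sequences. -/
def ADFamily (𝒜 : Set (ℕ → EVec 𝔽)) : Prop :=
  (∀ A ∈ 𝒜, IsBlockSeq A) ∧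
    ∀ A ∈ 𝒜, ∀ B ∈ 𝒜, A ≠ B → AlmostDisjoint (spanSeq A) (spanSeq B)

/-- A maximal almost disjoint (mad) family of block sequences. -/
def MadFamily (𝒜 : Set (ℕ → EVec 𝔽)) : Prop :=
  ADFamily 𝒜 ∧
    ∀ C : ℕ → EVec 𝔽, IsBlockSeq C →
      ∃ A ∈ 𝒜, ¬ AlmostDisjoint (spanSeq C) (spanSeq A)

/-- `Y ∈ I(𝒜)`: some finite union of spans of members of `𝒜` almost covers `Y`. -/
def MemI (𝒜 : Set (ℕ → EVec 𝔽)) (Y : Set (EVec 𝔽)) : Prop :=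
  ∃ F : Finset (ℕ → EVec 𝔽), ↑F ⊆ 𝒜 ∧
    SmallSet (Y \ ⋃ A ∈ F, (spanSeq A : Set (EVec 𝔽)))

/-- `Y ∈ I⁺(𝒜)`. -/
def MemIplus (𝒜 : Set (ℕ → EVec 𝔽)) (Y : Set (EVec 𝔽)) : Prop := ¬ MemI 𝒜 Y

/-- `Y ∈ I⁺⁺(𝒜)`: infinitely many `A ∈ 𝒜` with `Y ∩ ⟨A⟩` big. -/
def MemIpp (𝒜 : Set (ℕ → EVec 𝔽)) (Y : Set (EVec 𝔽)) : Prop :=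
  {A ∈ 𝒜 | BigSet (Y ∩ (spanSeq A : Set (EVec 𝔽)))}.Infinite

/-- `H⁻(𝒜)`. -/
def HMinus (𝒜 : Set (ℕ → EVec 𝔽)) : Set (ℕ → EVec 𝔽) :=
  {B | IsBlockSeq B ∧ MemIplus 𝒜 (spanSeq B : Set (EVec 𝔽))}

/-- `H(𝒜)`. -/
def HFam (𝒜 : Set (ℕ → EVec 𝔽)) : Set (ℕ → EVec 𝔽) :=
  {B | IsBlockSeq B ∧ MemIpp 𝒜 (spanSeq B : Set (EVec 𝔽))}

/-- `S` splits the interval partition whose intervals are `[b n, b (n+1))`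
(where `b 0 = 0` and `b` is strictly monotone). -/
def SplitsPartition (S : Set ℕ) (b : ℕ → ℕ) : Prop :=
  {n | ∀ k, b n ≤ k → k < b (n + 1) → k ∈ S}.Infinite ∧
  {n | ∀ k, b n ≤ k → k < b (n + 1) → k ∉ S}.Infinite

/-- `Z_S = span{e_n : n ∈ S}`. -/
def ZSub (𝔽 : Type) [Field 𝔽] (S : Set ℕ) : Submodule 𝔽 (EVec 𝔽) :=
  Submodule.span 𝔽 ((fun n => eVec 𝔽 n) '' S)

/-- The Ellentuck set `[a, A]`. -/
def EllSet (a : List (EVec 𝔽)) (A : ℕ → EVec 𝔽) : Set (ℕ → EVec 𝔽) :=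
  {B | IsBlockSeq B ∧ SeqLe B A ∧ rApprox B a.length = a}

/-- `𝒜ℛ ↾ A`: finite block sequences whose span lies in `⟨A⟩`. -/
def ARbelow (A : ℕ → EVec 𝔽) : Set (List (EVec 𝔽)) :=
  {a | IsBlockList a ∧ spanList a ≤ spanSeq A}

/-- `𝒜ℛ ↾ [a, A]`: members of `𝒜ℛ ↾ A` extending `a`. -/
def ARbelowIn (a : List (EVec 𝔽)) (A : ℕ → EVec 𝔽) : Set (List (EVec 𝔽)) :=
  {b ∈ ARbelow A | a <+: b}

/-- `{D b}` is a dense open family below `[a, A]` in `H`. -/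
def DenseOpenBelow (H : Set (ℕ → EVec 𝔽)) (a : List (EVec 𝔽)) (A : ℕ → EVec 𝔽)
    (D : List (EVec 𝔽) → Set (ℕ → EVec 𝔽)) : Prop :=
  ∀ b ∈ ARbelowIn a A,
    D b ⊆ H ∩ EllSet b A ∧
    (∀ B ∈ D b, ∀ C ∈ H ∩ EllSet b B, C ∈ D b) ∧
    (∀ B ∈ H ∩ EllSet b A, ∃ C ∈ H ∩ EllSet b B, C ∈ D b)

/-- `B` diagonalises the dense open family `{D b}` below `[a, A]` in `H`. -/
def DiagFamily (H : Set (ℕ → EVec 𝔽)) (a : List (EVec 𝔽)) (A : ℕ → EVec 𝔽)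
    (D : List (EVec 𝔽) → Set (ℕ → EVec 𝔽)) (B : ℕ → EVec 𝔽) : Prop :=
  B ∈ H ∩ EllSet a A ∧
    ∀ b ∈ ARbelowIn a A, ∃ Ab ∈ D b, EllSet b B ⊆ EllSet b Ab

/-- `H` is semiselective. -/
def Semiselective (H : Set (ℕ → EVec 𝔽)) : Prop :=
  ∀ A ∈ H, ∀ a ∈ ARbelow A, ∀ D : List (EVec 𝔽) → Set (ℕ → EVec 𝔽),
    DenseOpenBelow H a A D → ∃ B, DiagFamily H a A D B

/-- `D` is a dense open subset of `(H, ≤)`. -/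
def DenseOpenIn (H D : Set (ℕ → EVec 𝔽)) : Prop :=
  D ⊆ H ∧ (∀ A ∈ D, ∀ B ∈ H, SeqLe B A → B ∈ D) ∧ ∀ A ∈ H, ∃ B ∈ D, SeqLe B A
lemma le_of_mem_support (C : ℕ → EVec 𝔽) (hC : IsBlockSeq C) :
    ∀ n, ∀ i ∈ (C n).support, n ≤ i := by
  intro n
  induction n with
  | zero => intro i _; exact Nat.zero_le i
  | succ n ih =>
    intro i hi
    obtain ⟨j, hj⟩ := Finsupp.support_nonempty_iff.2 (hC.1 n)
    exact Nat.succ_le_of_lt (lt_of_le_of_lt (ih j hj) (hC.2 n (n+1) (Nat.lt_succ_self n) j hj i hi))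

lemma blockSeq_li (C : ℕ → EVec 𝔽) (hC : IsBlockSeq C) : LinearIndependent 𝔽 C := by
  rw [linearIndependent_iff']
  intro s g h i hi
  obtain ⟨j, hj⟩ := Finsupp.support_nonempty_iff.2 (hC.1 i)
  have h2 := congrArg (fun x : EVec 𝔽 => x j) h
  simp only [Finsupp.finset_sum_apply, Finsupp.smul_apply, smul_eq_mul, Finsupp.coe_zero,
    Pi.zero_apply] at h2
  rw [Finset.sum_eq_single i] at h2
  · have : (C i) j ≠ 0 := Finsupp.mem_support_iff.1 hj
    exact (mul_eq_zero.1 h2).resolve_right this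
  · intro k _ hk
    have : (C k) j = 0 := by
      rw [← Finsupp.notMem_support_iff]
      intro hjk
      rcases lt_or_gt_of_ne hk with h' | h'
      · exact lt_irrefl j (hC.2 k i h' j hjk j hj)
      · exact lt_irrefl j (hC.2 i k h' j hj j hjk)
    simp [this]
  · intro h'; exact absurd hi h'

def buildB (Bs : ℕ → ℕ → EVec 𝔽) : ℕ → EVec 𝔽
  | 0 => Bs (Nat.unpair 0).1 0
  | (k+1) => Bs (Nat.unpair (k+1)).1 ((buildB Bs k).support.sup id + 1)

lemma buildB_eq (Bs : ℕ → ℕ → EVec 𝔽) (k : ℕ) :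
    ∃ m, buildB Bs k = Bs (Nat.unpair k).1 m := by
  cases k with
  | zero => exact ⟨0, rfl⟩
  | succ k => exact ⟨_, rfl⟩

lemma buildB_blockSeq (Bs : ℕ → ℕ → EVec 𝔽) (hBs : ∀ n, IsBlockSeq (Bs n)) :
    IsBlockSeq (buildB Bs) := by
  constructor
  · intro k
    obtain ⟨m, hm⟩ := buildB_eq Bs k
    rw [hm]; exact (hBs _).1 m
  · have step : ∀ k, BlockLt (buildB Bs k) (buildB Bs (k+1)) := by
      intro k i hi j hj
      have h1 : i ≤ (buildB Bs k).support.sup id := Finset.le_sup (f := id) hi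
      have h2 : (buildB Bs k).support.sup id + 1 ≤ j := by
        have := le_of_mem_support (Bs (Nat.unpair (k+1)).1) (hBs _)
          ((buildB Bs k).support.sup id + 1) j
        exact this (by exact hj)
      omega
    intro m n hmn
    induction n with
    | zero => omega
    | succ n ih =>
      rcases Nat.lt_succ_iff_lt_or_eq.1 hmn with h' | h'
      · intro i hi j hj
        obtain ⟨t, ht⟩ := Finsupp.support_nonempty_iff.2
          ((buildB_eq Bs n).elim (fun m hm => hm ▸ (hBs _).1 m))
        exact lt_trans (ih h' i hi t ht) (step n t ht j hj)
      · subst h'; exact step m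

/-- given block sequences `B n ≤ A`, there is `B ≤ A` compatible with
every `B n`, with `⟨B⟩ ⊆ span(⋃ₙ ⟨B n⟩) ⊆ ⟨A⟩`. -/
theorem statement10 [Countable 𝔽] (A : ℕ → EVec 𝔽) (hA : IsBlockSeq A)
    (Bs : ℕ → ℕ → EVec 𝔽) (hBs : ∀ n, IsBlockSeq (Bs n))
    (hle : ∀ n, SeqLe (Bs n) A) :
    ∃ B : ℕ → EVec 𝔽, IsBlockSeq B ∧ SeqLe B A ∧
      (∀ n, ¬ AlmostDisjoint (spanSeq B) (spanSeq (Bs n))) ∧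
      spanSeq B ≤ (⨆ n, spanSeq (Bs n)) ∧ (⨆ n, spanSeq (Bs n)) ≤ spanSeq A := by

  set B := buildB Bs with hBdef
  have hB : IsBlockSeq B := buildB_blockSeq Bs hBs
  have hmem : ∀ k, B k ∈ spanSeq (Bs (Nat.unpair k).1) := by
    intro k
    obtain ⟨m, hm⟩ := buildB_eq Bs k
    rw [hBdef, hm]
    exact Submodule.subset_span ⟨m, rfl⟩
  have hsub : spanSeq B ≤ ⨆ n, spanSeq (Bs n) := by
    rw [spanSeq, Submodule.span_le]
    rintro x ⟨k, rfl⟩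
    exact le_iSup (fun n => spanSeq (Bs n)) _ (hmem k)
  have hsupA : (⨆ n, spanSeq (Bs n)) ≤ spanSeq A := iSup_le hle
  refine ⟨B, hB, le_trans hsub hsupA, ?_, hsub, hsupA⟩
  intro n hFD
  haveI : FiniteDimensional 𝔽 ↥(spanSeq B ⊓ spanSeq (Bs n)) := hFD
  set S : Set ℕ := {k | (Nat.unpair k).1 = n} with hSdef
  have hS : S.Infinite := Set.infinite_of_injective_forall_mem
    (f := fun m : ℕ => Nat.pair n m)
    (fun a b h => by simpa using congrArg (fun x => (Nat.unpair x).2) h)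
    (fun m => by simp [hSdef])
  haveI := hS.to_subtype
  have hvmem : ∀ k : S, B ↑k ∈ spanSeq B ⊓ spanSeq (Bs n) := fun k =>
    ⟨Submodule.subset_span ⟨(k : ℕ), rfl⟩, by
      have := hmem (k : ℕ); rwa [k.2] at this⟩
  let v : S → ↥(spanSeq B ⊓ spanSeq (Bs n)) := fun k => ⟨B ↑k, hvmem k⟩
  have hli : LinearIndependent 𝔽 v := by
    apply LinearIndependent.of_comp (Submodule.subtype _)
    exact (blockSeq_li B hB).comp Subtype.val Subtype.val_injective
  exact Module.Finite.not_linearIndependent_of_infinite v hli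
end
end

section
/- Let 𝒜 ⊆ E^[∞] be an almost disjoint family and let Y ⊆ E. Suppose span(Y) ∈ I^+(𝒜) and there is no B ∈ E^[∞] with ⟨B⟩ ⊆ span(Y) that is almost disjoint from every element of 𝒜. Then there exist pairwise distinct elements A_n ∈ 𝒜 (n < ω) and block sequences B_n ∈ E^[∞] with ⟨B_m⟩ ∩ ⟨B_n⟩ = {0} for m ≠ n, such that B_n ≤ A_n and ⟨B_n⟩ ⊆ span(Y) for all n. In particular, span(Y) ∈ I^{++}(𝒜). -/
noncomputable section

variable {𝔽 : Type} [Field 𝔽]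

open Classical in
lemma exists_high_supp (V : Submodule 𝔽 (EVec 𝔽)) (hV : ¬ FiniteDimensional 𝔽 V) (N : ℕ) :
    ∃ x, x ∈ V ∧ x ≠ 0 ∧ ∀ i ∈ x.support, N < i := by
  by_contra h
  push_neg at h
  apply hV
  have hfd : FiniteDimensional 𝔽 ↥(Finsupp.supported 𝔽 𝔽 (Set.Iic N)) := by
    have e := Finsupp.supportedEquivFinsupp (M := 𝔽) (R := 𝔽) (Set.Iic N)
    have : FiniteDimensional 𝔽 (↑(Set.Iic N) →₀ 𝔽) := by
      have e2 := Finsupp.linearEquivFunOnFinite 𝔽 𝔽 ↑(Set.Iic N)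
      exact Module.Finite.equiv e2.symm
    exact Module.Finite.equiv e.symm
  haveI : IsNoetherian 𝔽 ↥(Finsupp.supported 𝔽 𝔽 (Set.Iic N)) :=
    isNoetherian_of_linearEquiv (Finsupp.supportedEquivFinsupp (M := 𝔽) (R := 𝔽) (Set.Iic N)).symm
  refine Module.Finite.of_injective
    ((Finsupp.restrictDom 𝔽 𝔽 (Set.Iic N)).comp V.subtype) ?_
  rw [injective_iff_map_eq_zero]
  rintro ⟨x, hx⟩ hx0
  ext : 1
  simp only [LinearMap.comp_apply, Submodule.subtype_apply] at hx0
  by_contra hxne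
  have hxne : x ≠ 0 := fun h0 => hxne (by simp [h0])
  obtain ⟨i, hi, hiN⟩ := h x hx hxne
  have : (Finsupp.filter (· ∈ Set.Iic N) x) i = 0 := by
    have h2 : (((Finsupp.restrictDom 𝔽 𝔽 (Set.Iic N)) x : ↥(Finsupp.supported 𝔽 𝔽 (Set.Iic N))) : EVec 𝔽) i = 0 := by
      rw [hx0]; rfl
    rwa [Finsupp.restrictDom_apply] at h2
  rw [Finsupp.filter_apply] at this
  have hin : i ∈ Set.Iic N := Set.mem_Iic.2 hiN
  simp [hin] at this
  exact (Finsupp.mem_support_iff.1 hi) this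

lemma exists_blockseq_in (V : Submodule 𝔽 (EVec 𝔽)) (hV : ¬ FiniteDimensional 𝔽 V) :
    ∃ B : ℕ → EVec 𝔽, IsBlockSeq B ∧ ∀ n, B n ∈ V := by
  have hex : ∀ N : ℕ, ∃ x, x ∈ V ∧ x ≠ 0 ∧ ∀ i ∈ x.support, N < i :=
    exists_high_supp V hV
  set pick : ℕ → EVec 𝔽 := fun N => (hex N).choose with hpick
  have hspec : ∀ N, pick N ∈ V ∧ pick N ≠ 0 ∧ ∀ i ∈ (pick N).support, N < i :=
    fun N => (hex N).choose_spec
  set bnd : EVec 𝔽 → ℕ := fun x => x.support.sup id with hbnd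
  set B : ℕ → EVec 𝔽 := fun n =>
    Nat.rec (pick 0) (fun _ prev => pick (bnd prev)) n with hB
  have hB0 : B 0 = pick 0 := rfl
  have hBs : ∀ n, B (n + 1) = pick (bnd (B n)) := fun n => rfl
  have hmem : ∀ n, B n ∈ V := by
    intro n; cases n with
    | zero => exact (hspec 0).1
    | succ k => rw [hBs]; exact (hspec _).1
  have hne : ∀ n, B n ≠ 0 := by
    intro n; cases n with
    | zero => exact (hspec 0).2.1
    | succ k => rw [hBs]; exact (hspec _).2.1
  have hkey : ∀ n, ∀ j ∈ (B (n + 1)).support, bnd (B n) < j := by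
    intro n; rw [hBs]; exact (hspec _).2.2
  have hle : ∀ n, ∀ i ∈ (B n).support, i ≤ bnd (B n) := by
    intro n i hi; exact Finset.le_sup (f := id) hi
  have hmono : StrictMono fun n => bnd (B n) := by
    apply strictMono_nat_of_lt_succ
    intro n
    obtain ⟨j, hj⟩ := Finsupp.support_nonempty_iff.2 (hne (n + 1))
    exact lt_of_lt_of_le (hkey n j hj) (hle (n + 1) j hj)
  refine ⟨B, ⟨hne, ?_⟩, hmem⟩
  intro m n hmn i hi j hj
  obtain ⟨k, rfl⟩ : ∃ k, n = m + k + 1 := by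
    refine ⟨n - m - 1, ?_⟩; omega
  calc i ≤ bnd (B m) := hle m i hi
    _ ≤ bnd (B (m + k)) := hmono.monotone (Nat.le_add_right m k)
    _ < j := hkey (m + k) j hj

lemma step11 (𝒜 : Set (ℕ → EVec 𝔽)) (Y : Set (EVec 𝔽))
    (hplus : MemIplus 𝒜 (Submodule.span 𝔽 Y : Set (EVec 𝔽)))
    (hno : ¬ ∃ B : ℕ → EVec 𝔽, IsBlockSeq B ∧ spanSeq B ≤ Submodule.span 𝔽 Y ∧
      ∀ A ∈ 𝒜, AlmostDisjoint (spanSeq B) (spanSeq A))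
    (F : Finset (ℕ → EVec 𝔽)) (hF : ↑F ⊆ 𝒜) :
    ∃ p : (ℕ → EVec 𝔽) × (ℕ → EVec 𝔽), p.1 ∈ 𝒜 ∧ p.1 ∉ F ∧ IsBlockSeq p.2 ∧
      (∀ k, p.2 k ∈ spanSeq p.1) ∧ (∀ k, p.2 k ∈ Submodule.span 𝔽 Y) ∧
      ∀ x ∈ spanSeq p.2, x ≠ 0 → ∀ A' ∈ F, x ∉ spanSeq A' := by
  have hbig : BigSet ((Submodule.span 𝔽 Y : Set (EVec 𝔽)) \
      ⋃ A ∈ F, (spanSeq A : Set (EVec 𝔽))) := by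
    by_contra h
    exact hplus ⟨F, hF, h⟩
  obtain ⟨C, hC, hCsub⟩ := hbig
  have hCY : spanSeq C ≤ Submodule.span 𝔽 Y := by
    intro x hx
    by_cases hx0 : x = 0
    · simp [hx0]
    · exact (hCsub x hx hx0).1
  have hCavoid : ∀ x ∈ spanSeq C, x ≠ 0 → ∀ A' ∈ F, x ∉ spanSeq A' := by
    intro x hx hx0 A' hA'
    have := (hCsub x hx hx0).2
    simp only [Set.mem_iUnion, not_exists] at this
    exact fun hmem => this A' hA' hmem
  push_neg at hno
  obtain ⟨A, hA𝒜, hAD⟩ := hno C hC hCY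
  have hAnF : A ∉ F := by
    intro hAF
    apply hAD
    have hbot : spanSeq C ⊓ spanSeq A = ⊥ := by
      rw [eq_bot_iff]
      intro x hx
      rw [Submodule.mem_inf] at hx
      rw [Submodule.mem_bot]
      by_contra hx0
      exact hCavoid x hx.1 hx0 A hAF hx.2
    show FiniteDimensional 𝔽 ↥(spanSeq C ⊓ spanSeq A)
    rw [hbot]
    infer_instance
  have hVinf : ¬ FiniteDimensional 𝔽 ↥(spanSeq C ⊓ spanSeq A) := hAD
  obtain ⟨B, hBblock, hBmem⟩ := exists_blockseq_in _ hVinf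
  have hBle : spanSeq B ≤ spanSeq C ⊓ spanSeq A := by
    apply Submodule.span_le.2
    rintro _ ⟨k, rfl⟩
    exact hBmem k
  refine ⟨(A, B), hA𝒜, hAnF, hBblock, ?_, ?_, ?_⟩
  · exact fun k => ((Submodule.mem_inf).1 (hBmem k)).2
  · exact fun k => hCY ((Submodule.mem_inf).1 (hBmem k)).1
  · intro x hx hx0 A' hA'
    exact hCavoid x ((le_trans hBle inf_le_left) hx) hx0 A' hA'

/-- if `span Y ∈ I⁺(𝒜)` and no block sequence inside `span Y` is almost
disjoint from every member of `𝒜`, then there are distinct `Aₙ ∈ 𝒜` and pairwise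
disjoint block sequences `Bₙ ≤ Aₙ` with `⟨Bₙ⟩ ⊆ span Y`; in particular
`span Y ∈ I⁺⁺(𝒜)`. -/
theorem statement11 [Countable 𝔽] (𝒜 : Set (ℕ → EVec 𝔽)) (hAD : ADFamily 𝒜)
    (Y : Set (EVec 𝔽))
    (hplus : MemIplus 𝒜 (Submodule.span 𝔽 Y : Set (EVec 𝔽)))
    (hno : ¬ ∃ B : ℕ → EVec 𝔽, IsBlockSeq B ∧ spanSeq B ≤ Submodule.span 𝔽 Y ∧
      ∀ A ∈ 𝒜, AlmostDisjoint (spanSeq B) (spanSeq A)) :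
    (∃ As Bs : ℕ → ℕ → EVec 𝔽,
      (∀ n, As n ∈ 𝒜) ∧ (∀ m n, m ≠ n → As m ≠ As n) ∧
      (∀ n, IsBlockSeq (Bs n)) ∧
      (∀ m n, m ≠ n → spanSeq (Bs m) ⊓ spanSeq (Bs n) = ⊥) ∧
      (∀ n, SeqLe (Bs n) (As n)) ∧
      (∀ n, spanSeq (Bs n) ≤ Submodule.span 𝔽 Y)) ∧
    MemIpp 𝒜 (Submodule.span 𝔽 Y : Set (EVec 𝔽)) := by
  classical
  set T := {F : Finset (ℕ → EVec 𝔽) // ↑F ⊆ 𝒜} with hT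
  set nxt : T → (ℕ → EVec 𝔽) × (ℕ → EVec 𝔽) :=
    fun F => (step11 𝒜 Y hplus hno F.1 F.2).choose with hnxt
  have hspec : ∀ F : T, (nxt F).1 ∈ 𝒜 ∧ (nxt F).1 ∉ F.1 ∧ IsBlockSeq (nxt F).2 ∧
      (∀ k, (nxt F).2 k ∈ spanSeq (nxt F).1) ∧
      (∀ k, (nxt F).2 k ∈ Submodule.span 𝔽 Y) ∧
      ∀ x ∈ spanSeq (nxt F).2, x ≠ 0 → ∀ A' ∈ F.1, x ∉ spanSeq A' :=
    fun F => (step11 𝒜 Y hplus hno F.1 F.2).choose_spec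
  set s : ℕ → T := fun n => Nat.rec ⟨∅, by simp⟩
    (fun _ Fp => ⟨insert (nxt Fp).1 Fp.1, by
      rw [Finset.coe_insert]
      exact Set.insert_subset_iff.2 ⟨(hspec Fp).1, Fp.2⟩⟩) n with hs
  set As : ℕ → ℕ → EVec 𝔽 := fun n => (nxt (s n)).1 with hAs
  set Bs : ℕ → ℕ → EVec 𝔽 := fun n => (nxt (s n)).2 with hBs
  have hsucc : ∀ n, (s (n + 1)).1 = insert (As n) (s n).1 := fun n => rfl
  have hmono : ∀ m n, m ≤ n → (s m).1 ⊆ (s n).1 := by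
    intro m n hmn
    induction n with
    | zero =>
      have : m = 0 := by omega
      subst this; exact fun x hx => hx
    | succ k ih =>
      rcases Nat.lt_or_ge m (k + 1) with h | h
      · intro x hx
        rw [hsucc]
        exact Finset.mem_insert_of_mem (ih (by omega) hx)
      · have : m = k + 1 := by omega
        subst this; exact fun x hx => hx
  have hmemA : ∀ m n, m < n → As m ∈ (s n).1 := by
    intro m n hmn
    apply hmono (m + 1) n hmn
    rw [hsucc]
    exact Finset.mem_insert_self _ _
  have hA𝒜 : ∀ n, As n ∈ 𝒜 := fun n => (hspec (s n)).1
  have hAnotin : ∀ n, As n ∉ (s n).1 := fun n => (hspec (s n)).2.1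
  have hBblock : ∀ n, IsBlockSeq (Bs n) := fun n => (hspec (s n)).2.2.1
  have hBleA : ∀ n, spanSeq (Bs n) ≤ spanSeq (As n) := by
    intro n
    apply Submodule.span_le.2
    rintro _ ⟨k, rfl⟩
    exact (hspec (s n)).2.2.2.1 k
  have hBleY : ∀ n, spanSeq (Bs n) ≤ Submodule.span 𝔽 Y := by
    intro n
    apply Submodule.span_le.2
    rintro _ ⟨k, rfl⟩
    exact (hspec (s n)).2.2.2.2.1 k
  have hBavoid : ∀ n, ∀ x ∈ spanSeq (Bs n), x ≠ 0 → ∀ A' ∈ (s n).1, x ∉ spanSeq A' :=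
    fun n => (hspec (s n)).2.2.2.2.2
  have hAne : ∀ m n, m < n → As m ≠ As n := by
    intro m n hmn heq
    exact hAnotin n (heq ▸ hmemA m n hmn)
  have hAne' : ∀ m n, m ≠ n → As m ≠ As n := by
    intro m n hmn
    rcases Nat.lt_or_ge m n with h | h
    · exact hAne m n h
    · exact (hAne n m (by omega)).symm
  have hdisj : ∀ m n, m < n → spanSeq (Bs m) ⊓ spanSeq (Bs n) = ⊥ := by
    intro m n hmn
    rw [eq_bot_iff]
    intro x hx
    rw [Submodule.mem_inf] at hx
    rw [Submodule.mem_bot]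
    by_contra hx0
    exact hBavoid n x hx.2 hx0 (As m) (hmemA m n hmn) (hBleA m hx.1)
  constructor
  · exact ⟨As, Bs, hA𝒜, hAne', hBblock, by
      intro m n hmn
      rcases Nat.lt_or_ge m n with h | h
      · exact hdisj m n h
      · rw [inf_comm]; exact hdisj n m (by omega), hBleA, hBleY⟩
  · apply Set.infinite_of_injective_forall_mem (f := As)
    · intro a b hab
      by_contra hne
      exact hAne' a b hne hab
    · intro n
      refine ⟨hA𝒜 n, ⟨Bs n, hBblock n, ?_⟩⟩
      intro x hx _
      exact ⟨hBleY n hx, hBleA n hx⟩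
end
end

section
/- Let 𝒜 ⊆ E^[∞] be an almost disjoint family. Then H^-(𝒜) is a (p)-semicoideal: H^-(𝒜) is ≤*-upward closed, and every ≤-decreasing sequence (B_n)_{n<ω} in H^-(𝒜) has a weak diagonalisation C ∈ H^-(𝒜), i.e. C ≤ B₀ and C ≤* B_n for all n. -/
noncomputable section

variable {𝔽 : Type} [Field 𝔽]

set_option synthInstance.maxHeartbeats 400000
set_option maxHeartbeats 1000000

namespace S12


open Submodule

lemma suppNonempty {x : EVec 𝔽} (hx : x ≠ 0) : x.support.Nonempty :=
  Finsupp.support_nonempty_iff.2 hx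

lemma disjSupp {A : ℕ → EVec 𝔽} (hA : IsBlockSeq A) {i j : ℕ} (h : i ≠ j) :
    Disjoint (A i).support (A j).support := by
  rcases h.lt_or_gt with h' | h' <;> rw [Finset.disjoint_left] <;> intro a ha ha'
  · exact absurd (hA.2 _ _ h' a ha a ha') (lt_irrefl a)
  · exact absurd (hA.2 _ _ h' a ha' a ha) (lt_irrefl a)

lemma minIdx {A : ℕ → EVec 𝔽} (hA : IsBlockSeq A) : ∀ k, ∀ i ∈ (A k).support, k ≤ i := by
  intro k
  induction k with
  | zero => intro i _; exact Nat.zero_le i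
  | succ n ih =>
    intro i hi
    obtain ⟨i', hi'⟩ := suppNonempty (hA.1 n)
    exact Nat.succ_le_of_lt (lt_of_le_of_lt (ih i' hi') (hA.2 n (n+1) (Nat.lt_succ_self n) i' hi' i hi))

lemma mem_spanSeq {A : ℕ → EVec 𝔽} {x : EVec 𝔽} :
    x ∈ spanSeq A ↔ ∃ c : ℕ →₀ 𝔽, (c.sum fun j a => a • A j) = x :=
  Finsupp.mem_span_range_iff_exists_finsupp

lemma mem_spanSeq_self (A : ℕ → EVec 𝔽) (n : ℕ) : A n ∈ spanSeq A :=
  Submodule.subset_span ⟨n, rfl⟩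

lemma combo_apply {A : ℕ → EVec 𝔽} (hA : IsBlockSeq A) (c : ℕ →₀ 𝔽) {j i : ℕ}
    (hi : i ∈ (A j).support) : (c.sum fun k a => a • A k) i = c j * A j i := by
  classical
  rw [Finsupp.sum, Finsupp.finset_sum_apply]
  have hz : ∀ k ∈ c.support, k ≠ j → (c k • A k) i = 0 := by
    intro k _ hk
    have : A k i = 0 := by
      by_contra h
      exact (Finset.disjoint_left.1 (disjSupp hA hk) (Finsupp.mem_support_iff.2 h)) hi
    simp [Finsupp.smul_apply, this]
  by_cases hj : j ∈ c.support
  · rw [Finset.sum_eq_single_of_mem j hj (fun k hk hkj => hz k hk hkj)]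
    simp [Finsupp.smul_apply]
  · rw [Finset.sum_eq_zero (fun k hk => hz k hk (fun h => hj (h ▸ hk)))]
    rw [Finsupp.notMem_support_iff.1 hj, zero_mul]

lemma combo_support {A : ℕ → EVec 𝔽} (c : ℕ →₀ 𝔽) {i : ℕ}
    (hi : i ∈ (c.sum fun k a => a • A k).support) : ∃ j, i ∈ (A j).support := by
  classical
  rw [Finsupp.sum] at hi
  have := Finsupp.support_finset_sum (s := c.support) (f := fun k => c k • A k) hi
  obtain ⟨j, _, hj⟩ := Finset.mem_biUnion.1 this
  exact ⟨j, Finsupp.support_smul hj⟩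



lemma tail_blockseq {A : ℕ → EVec 𝔽} (hA : IsBlockSeq A) (N : ℕ) : IsBlockSeq (tailSeq A N) :=
  ⟨fun _ => hA.1 _, fun m n h => hA.2 _ _ (by omega)⟩

lemma comp_blockseq {A : ℕ → EVec 𝔽} (hA : IsBlockSeq A) {g : ℕ → ℕ} (hg : StrictMono g) :
    IsBlockSeq (fun n => A (g n)) := ⟨fun _ => hA.1 _, fun m n h => hA.2 _ _ (hg h)⟩

lemma spanSeq_le_of_mem {A : ℕ → EVec 𝔽} {V : Submodule 𝔽 (EVec 𝔽)} (h : ∀ n, A n ∈ V) :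
    spanSeq A ≤ V := Submodule.span_le.2 (by rintro x ⟨n, rfl⟩; exact h n)

lemma spanList_le_of_mem {l : List (EVec 𝔽)} {V : Submodule 𝔽 (EVec 𝔽)} (h : ∀ y ∈ l, y ∈ V) :
    spanList l ≤ V := Submodule.span_le.2 (by intro x hx; exact h x hx)

lemma tail_le (A : ℕ → EVec 𝔽) (N : ℕ) : spanSeq (tailSeq A N) ≤ spanSeq A :=
  spanSeq_le_of_mem fun n => Submodule.subset_span ⟨n + N, rfl⟩

lemma mem_tail_of_beyond {A : ℕ → EVec 𝔽} (hA : IsBlockSeq A) {x : EVec 𝔽} {N : ℕ}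
    (hx : x ∈ spanSeq A) (hb : ∀ j < N, BlockLt (A j) x) : x ∈ spanSeq (tailSeq A N) := by
  obtain ⟨c, rfl⟩ := mem_spanSeq.1 hx
  have key : ∀ j ∈ c.support, N ≤ j := by
    intro j hj
    by_contra h
    push_neg at h
    obtain ⟨i, hi⟩ := suppNonempty (hA.1 j)
    have hne : (c.sum fun k a => a • A k) i ≠ 0 := by
      rw [combo_apply hA c hi]
      exact mul_ne_zero (Finsupp.mem_support_iff.1 hj) (Finsupp.mem_support_iff.1 hi)
    exact absurd (hb j h i hi i (Finsupp.mem_support_iff.2 hne)) (lt_irrefl i)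
  rw [Finsupp.sum]
  refine Submodule.sum_mem _ (fun k hk => Submodule.smul_mem _ _ (Submodule.subset_span ?_))
  exact ⟨k - N, by simp only [tailSeq]; rw [Nat.sub_add_cancel (key k hk)]⟩

lemma supp_ge_of_mem_tail {A : ℕ → EVec 𝔽} (hA : IsBlockSeq A) {x : EVec 𝔽} {K : ℕ}
    (hx : x ∈ spanSeq (tailSeq A K)) : ∀ i ∈ x.support, K ≤ i := by
  obtain ⟨c, rfl⟩ := mem_spanSeq.1 hx
  intro i hi
  obtain ⟨j, hj⟩ := combo_support c hi
  calc K ≤ j + K := Nat.le_add_left _ _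
  _ ≤ i := minIdx hA (j + K) i hj

lemma length_rApprox (f : ℕ → EVec 𝔽) (n : ℕ) : (rApprox f n).length = n := by
  simp [rApprox]

lemma mem_rApprox {f : ℕ → EVec 𝔽} {n j : ℕ} (h : j < n) : f j ∈ rApprox f n := by
  simp only [rApprox, List.mem_map]
  exact ⟨j, List.mem_range.2 h, rfl⟩

lemma span_split (A : ℕ → EVec 𝔽) (K : ℕ) :
    spanSeq A ≤ spanList (rApprox A K) ⊔ spanSeq (tailSeq A K) := by
  refine spanSeq_le_of_mem fun n => ?_
  rcases lt_or_ge n K with h | h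
  · exact Submodule.mem_sup_left (Submodule.subset_span (mem_rApprox h))
  · exact Submodule.mem_sup_right (Submodule.subset_span
      ⟨n - K, by simp only [tailSeq]; rw [Nat.sub_add_cancel h]⟩)

lemma list_bound (l : List (EVec 𝔽)) : ∃ M : ℕ, ∀ y ∈ l, ∀ i ∈ y.support, i ≤ M := by
  induction l with
  | nil => exact ⟨0, by simp⟩
  | cons v t ih =>
    obtain ⟨M, hM⟩ := ih
    refine ⟨max (v.support.sup id) M, ?_⟩
    intro y hy i hi
    rcases List.mem_cons.1 hy with rfl | hy
    · exact le_max_of_le_left (Finset.le_sup (f := id) hi)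
    · exact le_max_of_le_right (hM y hy i hi)

lemma findim_bound (U : Submodule 𝔽 (EVec 𝔽)) [FiniteDimensional 𝔽 U] :
    ∃ M : ℕ, ∀ x ∈ U, ∀ i ∈ x.support, i ≤ M := by
  obtain ⟨s, hs⟩ := (Submodule.fg_iff_finiteDimensional U).2 ‹_›
  obtain ⟨M, hM⟩ := list_bound s.toList
  refine ⟨M, fun x hx => ?_⟩
  rw [← hs] at hx
  induction hx using Submodule.span_induction with
  | mem y h => exact hM y (Finset.mem_toList.2 h)
  | zero => simp
  | add y z _ _ ihy ihz =>
    intro i hi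
    rcases Finset.mem_union.1 (Finsupp.support_add hi) with h | h
    exacts [ihy i h, ihz i h]
  | smul a y _ ihy => exact fun i hi => ihy i (Finsupp.support_smul hi)

lemma spanSeq_not_findim {C : ℕ → EVec 𝔽} (hC : IsBlockSeq C) :
    ¬ FiniteDimensional 𝔽 (spanSeq C) := by
  intro h
  obtain ⟨M, hM⟩ := findim_bound (spanSeq C)
  obtain ⟨i, hi⟩ := suppNonempty (hC.1 (M+1))
  have h1 : M + 1 ≤ i := minIdx hC (M+1) i hi
  have h2 : i ≤ M := hM _ (mem_spanSeq_self C (M+1)) i hi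
  omega

lemma spanList_findim (l : List (EVec 𝔽)) : FiniteDimensional 𝔽 (spanList l) :=
  FiniteDimensional.span_of_finite 𝔽 l.finite_toSet

lemma findim_sup {S1 S2 : Submodule 𝔽 (EVec 𝔽)} (h1 : FiniteDimensional 𝔽 S1)
    (h2 : FiniteDimensional 𝔽 S2) : FiniteDimensional 𝔽 ↥(S1 ⊔ S2) :=
  Submodule.finiteDimensional_sup S1 S2

lemma findim_singleton (x : EVec 𝔽) : FiniteDimensional 𝔽 ↥(Submodule.span 𝔽 {x}) :=
  FiniteDimensional.span_of_finite 𝔽 (Set.finite_singleton x)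

lemma step_findim {S V : Submodule 𝔽 (EVec 𝔽)} (x : EVec 𝔽)
    (hSV : FiniteDimensional 𝔽 ↥(S ⊓ V)) :
    FiniteDimensional 𝔽 ↥(S ⊓ (V ⊔ Submodule.span 𝔽 {x})) := by
  by_cases h0 : ∃ x₀ ∈ S ⊓ (V ⊔ Submodule.span 𝔽 {x}), x₀ ∉ V
  · obtain ⟨x₀, hx₀, hx₀V⟩ := h0
    obtain ⟨v₀, hv₀, w₀, hw₀, hvw₀⟩ := Submodule.mem_sup.1 hx₀.2
    obtain ⟨t₀, rfl⟩ := Submodule.mem_span_singleton.1 hw₀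
    have ht₀ : t₀ ≠ 0 := by
      rintro rfl
      exact hx₀V (by rw [← hvw₀, zero_smul, add_zero]; exact hv₀)
    have hle : S ⊓ (V ⊔ Submodule.span 𝔽 {x}) ≤ (S ⊓ V) ⊔ Submodule.span 𝔽 {x₀} := by
      rintro y ⟨hyS, hy2⟩
      obtain ⟨v, hv, w, hw, hvw⟩ := Submodule.mem_sup.1 hy2
      obtain ⟨t, rfl⟩ := Submodule.mem_span_singleton.1 hw
      have key : y - (t * t₀⁻¹) • x₀ ∈ S ⊓ V := by
        constructor
        · exact Submodule.sub_mem _ hyS (Submodule.smul_mem _ _ hx₀.1)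
        · have : y - (t * t₀⁻¹) • x₀ = (v - (t * t₀⁻¹) • v₀) + (t - t * t₀⁻¹ * t₀) • x := by
            rw [← hvw, ← hvw₀]
            simp only [smul_add, smul_smul, sub_smul]
            abel
          rw [this, mul_assoc, inv_mul_cancel₀ ht₀, mul_one, sub_self, zero_smul, add_zero]
          exact Submodule.sub_mem _ hv (Submodule.smul_mem _ _ hv₀)
      have : y = (y - (t * t₀⁻¹) • x₀) + (t * t₀⁻¹) • x₀ := by abel
      rw [this]
      exact Submodule.add_mem _ (Submodule.mem_sup_left key)
        (Submodule.mem_sup_right (Submodule.smul_mem _ _ (Submodule.subset_span rfl)))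
    haveI := findim_sup hSV (findim_singleton x₀)
    exact Submodule.finiteDimensional_of_le hle
  · push_neg at h0
    have hle : S ⊓ (V ⊔ Submodule.span 𝔽 {x}) ≤ S ⊓ V := fun y hy => ⟨hy.1, h0 y hy⟩
    exact Submodule.finiteDimensional_of_le hle

lemma fmaster {S V U : Submodule 𝔽 (EVec 𝔽)} (h : S ≤ V ⊔ U)
    (hU : FiniteDimensional 𝔽 U) (hSV : FiniteDimensional 𝔽 ↥(S ⊓ V)) :
    FiniteDimensional 𝔽 ↥S := by
  classical
  obtain ⟨s, hs⟩ := (Submodule.fg_iff_finiteDimensional U).2 hU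
  rw [← hs] at h
  clear hs hU
  induction s using Finset.induction_on generalizing V with
  | empty =>
    simp only [Finset.coe_empty, Submodule.span_empty, sup_bot_eq] at h
    have : S ⊓ V = S := inf_eq_left.2 h
    rwa [this] at hSV
  | insert a t ha ih =>
    rw [Finset.coe_insert, Submodule.span_insert, ← sup_assoc] at h
    exact ih (V := V ⊔ Submodule.span 𝔽 {a}) (step_findim a hSV) h

lemma blocklist_nil : IsBlockList ([] : List (EVec 𝔽)) := ⟨by simp, List.Pairwise.nil⟩

lemma blocklist_snoc {l : List (EVec 𝔽)} {x : EVec 𝔽} (hl : IsBlockList l) (hx : x ≠ 0)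
    (hlt : ∀ y ∈ l, BlockLt y x) : IsBlockList (l ++ [x]) := by
  constructor
  · intro y hy
    rcases List.mem_append.1 hy with h | h
    · exact hl.1 y h
    · simp only [List.mem_singleton] at h; exact h ▸ hx
  · rw [List.pairwise_append]
    refine ⟨hl.2, List.pairwise_singleton _ _, fun a ha b hb => ?_⟩
    simp only [List.mem_singleton] at hb
    exact hb ▸ hlt a ha

lemma spanList_nil : spanList ([] : List (EVec 𝔽)) = ⊥ := by
  have : {x : EVec 𝔽 | x ∈ ([] : List (EVec 𝔽))} = ∅ := by simp
  rw [spanList, this, Submodule.span_empty]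

lemma spanList_snoc (l : List (EVec 𝔽)) (x : EVec 𝔽) :
    spanList (l ++ [x]) = spanList l ⊔ Submodule.span 𝔽 {x} := by
  rw [spanList, spanList, ← Submodule.span_union]
  congr 1
  ext y
  simp only [Set.mem_setOf_eq, List.mem_append, List.mem_singleton, Set.mem_union, Set.mem_singleton_iff]

lemma build_seq (P : List (EVec 𝔽) → Prop) (h0 : P [])
    (hstep : ∀ l, P l → ∃ x, P (l ++ [x])) :
    ∃ f : ℕ → EVec 𝔽, ∀ n, P (rApprox f n) := by
  classical
  let step : {l : List (EVec 𝔽) // P l} → {l : List (EVec 𝔽) // P l} := fun l =>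
    ⟨l.1 ++ [Classical.choose (hstep l.1 l.2)], Classical.choose_spec (hstep l.1 l.2)⟩
  let L : ℕ → {l : List (EVec 𝔽) // P l} := fun n => step^[n] ⟨[], h0⟩
  have hLs : ∀ n, L (n + 1) = step (L n) := by
    intro n
    simp only [L, Function.iterate_succ_apply']
  have hlen : ∀ n, (L n).1.length = n := by
    intro n
    induction n with
    | zero => rfl
    | succ n ih => rw [hLs n]; simp [step, ih]
  refine ⟨fun n => (L (n + 1)).1.getD n 0, fun n => ?_⟩
  have hpref : ∀ n, rApprox (fun n => (L (n + 1)).1.getD n 0) n = (L n).1 := by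
    intro n
    induction n with
    | zero => simp [rApprox, L]
    | succ n ih =>
      have h1 : (L (n + 1)).1 = (L n).1 ++ [Classical.choose (hstep (L n).1 (L n).2)] := by
        rw [hLs n]
      have h2 : rApprox (fun n => (L (n + 1)).1.getD n 0) (n + 1)
          = rApprox (fun n => (L (n + 1)).1.getD n 0) n ++ [(L (n + 1)).1.getD n 0] := by
        simp [rApprox, List.range_succ]
      rw [h2, ih, h1]
      congr 1
      rw [List.getD_eq_getElem?_getD, List.getElem?_append_right (by rw [hlen n])]
      simp [hlen n]
  rw [hpref n]
  exact (L n).2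

lemma rApprox_get {f : ℕ → EVec 𝔽} {m i : ℕ} (h : i < (rApprox f m).length) :
    (rApprox f m).get ⟨i, h⟩ = f i := by
  simp [rApprox]

lemma self_mem_rApprox (f : ℕ → EVec 𝔽) (n : ℕ) : f n ∈ rApprox f (n + 1) :=
  mem_rApprox (Nat.lt_succ_self n)

lemma blockseq_of_prefixes {f : ℕ → EVec 𝔽} (h : ∀ n, IsBlockList (rApprox f n)) :
    IsBlockSeq f := by
  constructor
  · intro n
    exact (h (n + 1)).1 (f n) (self_mem_rApprox f n)
  · intro m n hmn
    have hp := (h (n + 1)).2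
    rw [rApprox, List.pairwise_map] at hp
    have := List.pairwise_iff_get.1 hp
      ⟨m, by simp; omega⟩ ⟨n, by simp⟩ (by simp [Fin.lt_def]; omega)
    simpa using this

lemma exists_prefix_of_mem {f : ℕ → EVec 𝔽} {x : EVec 𝔽} (hx : x ∈ spanSeq f) :
    ∃ n, x ∈ spanList (rApprox f n) := by
  obtain ⟨c, rfl⟩ := mem_spanSeq.1 hx
  refine ⟨c.support.sup id + 1, ?_⟩
  rw [Finsupp.sum]
  refine Submodule.sum_mem _ fun k hk => Submodule.smul_mem _ _ (Submodule.subset_span ?_)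
  exact mem_rApprox (Nat.lt_succ_of_le (Finset.le_sup (f := id) hk))

lemma spanList_rApprox_le (f : ℕ → EVec 𝔽) (n : ℕ) : spanList (rApprox f n) ≤ spanSeq f := by
  refine spanList_le_of_mem fun y hy => ?_
  simp only [rApprox, List.mem_map, List.mem_range] at hy
  obtain ⟨j, _, rfl⟩ := hy
  exact mem_spanSeq_self f j

lemma snoc_escape {l : List (EVec 𝔽)} {x : EVec 𝔽} {V : Submodule 𝔽 (EVec 𝔽)}
    (hl : spanList l ⊓ V = ⊥) (hx : spanList (l ++ [x]) ⊓ V ≠ ⊥) :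
    x ∈ V ⊔ spanList l := by
  obtain ⟨v, hv, hv0⟩ := Submodule.exists_mem_ne_zero_of_ne_bot hx
  rw [Submodule.mem_inf, spanList_snoc] at hv
  obtain ⟨hv1, hv2⟩ := hv
  obtain ⟨u, hu, w, hw, huw⟩ := Submodule.mem_sup.1 hv1
  obtain ⟨t, rfl⟩ := Submodule.mem_span_singleton.1 hw
  by_cases ht : t = 0
  · exfalso
    apply hv0
    have hvl : v ∈ spanList l ⊓ V := by
      refine ⟨?_, hv2⟩
      rw [← huw, ht, zero_smul, add_zero]
      exact hu
    rw [hl] at hvl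
    simpa using hvl
  · have hxe : x = t⁻¹ • (v - u) := by
      have h1 : t • x = v - u := by rw [← huw]; abel
      rw [← h1, smul_smul, inv_mul_cancel₀ ht, one_smul]
    rw [hxe]
    exact Submodule.smul_mem _ _
      (Submodule.sub_mem _ (Submodule.mem_sup_left hv2) (Submodule.mem_sup_right hu))

lemma exists_far {V : Submodule 𝔽 (EVec 𝔽)} (hV : ¬ FiniteDimensional 𝔽 V) (M : ℕ) :
    ∃ x ∈ V, x ≠ 0 ∧ ∀ i ∈ x.support, M < i := by
  by_contra hcon
  push_neg at hcon
  apply hV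
  let φ : EVec 𝔽 →ₗ[𝔽] (Fin (M + 1) → 𝔽) :=
    { toFun := fun x k => x k
      map_add' := by intro a b; ext k; simp
      map_smul' := by intro a b; ext k; simp }
  apply FiniteDimensional.of_injective (φ.comp V.subtype)
  intro x y hxy
  by_contra hne
  have hd : ((x : EVec 𝔽) - y) ∈ V := Submodule.sub_mem _ x.2 y.2
  have hd0 : ((x : EVec 𝔽) - y) ≠ 0 := by
    intro h
    exact hne (Subtype.ext (sub_eq_zero.1 h))
  obtain ⟨i, hi, hiM⟩ := hcon _ hd hd0
  have : ((x : EVec 𝔽) - y) i = 0 := by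
    have h1 : φ (x : EVec 𝔽) = φ (y : EVec 𝔽) := hxy
    have h2 := congrFun h1 ⟨i, Nat.lt_succ_of_le hiM⟩
    simp only [φ, LinearMap.coe_mk, AddHom.coe_mk] at h2
    simp [Finsupp.sub_apply, h2]
  exact Finsupp.mem_support_iff.1 hi this

lemma blk {V : Submodule 𝔽 (EVec 𝔽)} (hV : ¬ FiniteDimensional 𝔽 V) :
    ∃ w : ℕ → EVec 𝔽, IsBlockSeq w ∧ ∀ n, w n ∈ V := by
  have hbuild := build_seq (fun l => IsBlockList l ∧ ∀ y ∈ l, y ∈ V)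
    ⟨blocklist_nil, by simp⟩
    (by
      intro l hl
      obtain ⟨M, hM⟩ := list_bound l
      obtain ⟨x, hxV, hx0, hxf⟩ := exists_far hV M
      refine ⟨x, blocklist_snoc hl.1 hx0 (fun y hy i hi j hj => ?_), fun y hy => ?_⟩
      · exact lt_of_le_of_lt (hM y hy i hi) (hxf j hj)
      · rcases List.mem_append.1 hy with h | h
        · exact hl.2 y h
        · simp only [List.mem_singleton] at h; exact h ▸ hxV)
  obtain ⟨f, hf⟩ := hbuild
  exact ⟨f, blockseq_of_prefixes (fun n => (hf n).1),
    fun n => (hf (n + 1)).2 (f n) (self_mem_rApprox f n)⟩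

lemma strict_mono_into {S : Set ℕ} (hS : S.Infinite) :
    ∃ e : ℕ → ℕ, StrictMono e ∧ ∀ j, e j ∈ S := by
  have h : ∀ n, ∃ m, m ∈ S ∧ n < m := by
    intro n
    obtain ⟨m, hm, hn⟩ := hS.exists_gt n
    exact ⟨m, hm, hn⟩
  choose g hgS hglt using h
  refine ⟨fun j => g^[j + 1] 0, ?_, ?_⟩
  · apply strictMono_nat_of_lt_succ
    intro n
    conv_rhs => rw [Function.iterate_succ_apply']
    exact hglt _
  · intro j
    show g^[j + 1] 0 ∈ S
    rw [Function.iterate_succ_apply']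
    exact hgS _

lemma findim_finset_sup {ι : Type} (F : Finset ι) (W : ι → Submodule 𝔽 (EVec 𝔽))
    (h : ∀ A ∈ F, FiniteDimensional 𝔽 ↥(W A)) : FiniteDimensional 𝔽 ↥(F.sup W) := by
  classical
  induction F using Finset.induction_on with
  | empty =>
    rw [Finset.sup_empty]
    infer_instance
  | insert a t ha ih =>
    rw [Finset.sup_insert]
    exact findim_sup (h a (Finset.mem_insert_self a t))
      (ih (fun x hx => h x (Finset.mem_insert_of_mem hx)))

lemma lcover {B₀ : Submodule 𝔽 (EVec 𝔽)} (hB : ¬ FiniteDimensional 𝔽 B₀)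
    (F : Finset (ℕ → EVec 𝔽)) (W : (ℕ → EVec 𝔽) → Submodule 𝔽 (EVec 𝔽))
    (hcov : ∀ x ∈ B₀, ∃ A ∈ F, x ∈ W A)
    (hpair : ∀ A ∈ F, ∀ A' ∈ F, A ≠ A' → FiniteDimensional 𝔽 ↥(W A ⊓ W A')) :
    ∃ A ∈ F, B₀ ≤ W A := by
  classical
  have h1 : ∃ A ∈ F, ¬ FiniteDimensional 𝔽 ↥(B₀ ⊓ W A) := by
    by_contra hall
    push_neg at hall
    have hle : B₀ ≤ F.sup fun A => B₀ ⊓ W A := by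
      intro x hx
      obtain ⟨A, hA, hxA⟩ := hcov x hx
      exact (Finset.le_sup (f := fun A => B₀ ⊓ W A) hA : B₀ ⊓ W A ≤ _) ⟨hx, hxA⟩
    haveI hfd : FiniteDimensional 𝔽 ↥(F.sup fun A => B₀ ⊓ W A) :=
      findim_finset_sup F _ hall
    exact hB (Submodule.finiteDimensional_of_le hle)
  obtain ⟨A₀, hA₀F, hA₀⟩ := h1
  obtain ⟨w, hwblk, hwmem⟩ := blk hA₀
  refine ⟨A₀, hA₀F, fun x hx => ?_⟩
  have hchoice : ∀ k : ℕ, ∃ A, A ∈ F ∧ x + w k ∈ W A := by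
    intro k
    obtain ⟨A, hA, h⟩ := hcov (x + w k) (Submodule.add_mem _ hx ((hwmem k).1))
    exact ⟨A, hA, h⟩
  choose g hgF hgW using hchoice
  obtain ⟨y, hy⟩ := Finite.exists_infinite_fiber (fun k => (⟨g k, hgF k⟩ : {A // A ∈ F}))
  have hSinf : Set.Infinite {k | g k = (y : ℕ → EVec 𝔽)} := by
    rw [← Set.infinite_coe_iff]
    have : (fun k => (⟨g k, hgF k⟩ : {A // A ∈ F})) ⁻¹' {y} = {k | g k = (y : ℕ → EVec 𝔽)} := by
      ext k
      simp [Subtype.ext_iff]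
    rwa [this] at hy
  by_cases hA10 : (y : ℕ → EVec 𝔽) = A₀
  · obtain ⟨k, hk, _⟩ := hSinf.exists_gt 0
    have h1 : x + w k ∈ W A₀ := by
      have := hgW k
      rwa [(by exact hk : g k = (y : ℕ → EVec 𝔽)), hA10] at this
    have h2 : w k ∈ W A₀ := (hwmem k).2
    have := Submodule.sub_mem _ h1 h2
    simpa using this
  · exfalso
    obtain ⟨l0, hl0, _⟩ := hSinf.exists_gt 0
    obtain ⟨e, hemono, heS⟩ := strict_mono_into hSinf
    have hdiff : ∀ j, w (e j) ∈ (W (y : ℕ → EVec 𝔽) ⊓ W A₀) ⊔ Submodule.span 𝔽 {w l0} := by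
      intro j
      have h1 : x + w (e j) ∈ W (y : ℕ → EVec 𝔽) := by
        have := hgW (e j)
        rwa [(heS j : g (e j) = (y : ℕ → EVec 𝔽))] at this
      have h2 : x + w l0 ∈ W (y : ℕ → EVec 𝔽) := by
        have := hgW l0
        rwa [(hl0 : g l0 = (y : ℕ → EVec 𝔽))] at this
      have hd1 : w (e j) - w l0 ∈ W (y : ℕ → EVec 𝔽) := by
        have := Submodule.sub_mem _ h1 h2
        simpa using this
      have hd2 : w (e j) - w l0 ∈ W A₀ := Submodule.sub_mem _ (hwmem (e j)).2 (hwmem l0).2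
      have hrw : w (e j) = (w (e j) - w l0) + w l0 := by abel
      rw [hrw]
      exact Submodule.add_mem _ (Submodule.mem_sup_left ⟨hd1, hd2⟩)
        (Submodule.mem_sup_right (Submodule.subset_span rfl))
    haveI hfd : FiniteDimensional 𝔽 ↥((W (y : ℕ → EVec 𝔽) ⊓ W A₀) ⊔ Submodule.span 𝔽 {w l0}) :=
      findim_sup (hpair _ y.2 _ hA₀F hA10) (findim_singleton _)
    have hle2 : spanSeq (fun j => w (e j)) ≤ (W (y : ℕ → EVec 𝔽) ⊓ W A₀) ⊔ Submodule.span 𝔽 {w l0} :=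
      spanSeq_le_of_mem hdiff
    exact spanSeq_not_findim (comp_blockseq hwblk hemono)
      (Submodule.finiteDimensional_of_le hle2)

lemma semico (𝒜 : Set (ℕ → EVec 𝔽)) : Semicoideal (HMinus 𝒜) := by
  constructor
  · exact fun A hA => hA.1
  · rintro A hA B hBblk hstar
    obtain ⟨hAblk, hApos⟩ := hA
    obtain ⟨N, hN⟩ := hstar
    refine ⟨hBblk, ?_⟩
    rintro ⟨F, hF𝒜, hsmall⟩
    refine hApos ⟨F, hF𝒜, ?_⟩
    rintro ⟨C, hCblk, hCsub⟩
    apply hsmall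
    obtain ⟨M, hM⟩ := list_bound (rApprox A N)
    refine ⟨tailSeq C (M + 1), tail_blockseq hCblk _, ?_⟩
    intro x hx hx0
    have hxC : x ∈ spanSeq C := tail_le C (M + 1) hx
    obtain ⟨hxA, hxU⟩ := hCsub x hxC hx0
    refine ⟨?_, hxU⟩
    have hbey : ∀ j < N, BlockLt (A j) x := by
      intro j hj i' hi' i hi
      have h1 : i' ≤ M := hM (A j) (mem_rApprox hj) i' hi'
      have h2 : M + 1 ≤ i := supp_ge_of_mem_tail hCblk hx i hi
      omega
    exact hN (mem_tail_of_beyond hAblk hxA hbey)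

lemma pair_findim {V V' U : Submodule 𝔽 (EVec 𝔽)} (hVV' : FiniteDimensional 𝔽 ↥(V ⊓ V'))
    (hU : FiniteDimensional 𝔽 U) : FiniteDimensional 𝔽 ↥((V ⊔ U) ⊓ (V' ⊔ U)) := by
  haveI := hVV'
  have hPfd : FiniteDimensional 𝔽 ↥((V ⊔ U) ⊓ V') := by
    refine fmaster (V := V) (U := U) inf_le_left hU ?_
    refine Submodule.finiteDimensional_of_le (S₂ := V ⊓ V') ?_
    intro x hx
    rw [Submodule.mem_inf] at hx ⊢
    rw [Submodule.mem_inf] at *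
    exact ⟨hx.2, hx.1.2⟩
  haveI := hPfd
  refine fmaster (V := V') (U := U) inf_le_right hU ?_
  refine Submodule.finiteDimensional_of_le (S₂ := (V ⊔ U) ⊓ V') ?_
  intro x hx
  rw [Submodule.mem_inf] at hx ⊢
  exact ⟨(Submodule.mem_inf.1 hx.1).1, hx.2⟩

lemma bad_single {𝒜 : Set (ℕ → EVec 𝔽)} (hAD : ADFamily 𝒜) {B : ℕ → EVec 𝔽}
    (hB : IsBlockSeq B) (hbad : MemI 𝒜 (spanSeq B : Set (EVec 𝔽))) :
    ∃ As ∈ 𝒜, ∃ U : Submodule 𝔽 (EVec 𝔽),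
      FiniteDimensional 𝔽 U ∧ spanSeq B ≤ spanSeq As ⊔ U := by
  classical
  obtain ⟨F, hF, hsmall⟩ := hbad
  have hFne : F.Nonempty := by
    rcases F.eq_empty_or_nonempty with rfl | h
    · exfalso
      apply hsmall
      refine ⟨B, hB, fun x hx hx0 => ⟨hx, by simp⟩⟩
    · exact h
  set P : List (EVec 𝔽) → Prop := fun l =>
    IsBlockList l ∧ (∀ y ∈ l, y ∈ spanSeq B) ∧ ∀ A ∈ F, spanList l ⊓ spanSeq A = ⊥ with hP
  have h0 : P [] := ⟨blocklist_nil, by simp, fun A _ => by rw [spanList_nil, bot_inf_eq]⟩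
  by_cases hstep : ∀ l, P l → ∃ x, P (l ++ [x])
  · exfalso
    obtain ⟨f, hf⟩ := build_seq P h0 hstep
    apply hsmall
    refine ⟨f, blockseq_of_prefixes (fun n => (hf n).1), fun x hx hx0 => ?_⟩
    obtain ⟨n, hxn⟩ := exists_prefix_of_mem hx
    constructor
    · exact spanList_le_of_mem ((hf n).2.1) hxn
    · intro hxU
      simp only [Set.mem_iUnion, SetLike.mem_coe] at hxU
      obtain ⟨A, hAF, hxA⟩ := hxU
      have hb := (hf n).2.2 A hAF
      have hxm : x ∈ spanList (rApprox f n) ⊓ spanSeq A := ⟨hxn, hxA⟩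
      rw [hb] at hxm
      exact hx0 (by simpa using hxm)
  · push_neg at hstep
    obtain ⟨l, hPl, hnoext⟩ := hstep
    obtain ⟨M, hM⟩ := list_bound l
    have hcov0 : ∀ x ∈ spanSeq (tailSeq B (M + 1)), x ≠ 0 →
        ∃ A ∈ F, x ∈ spanSeq A ⊔ spanList l := by
      intro x hx hx0
      have hbey := supp_ge_of_mem_tail hB hx
      have hbl : IsBlockList (l ++ [x]) := blocklist_snoc hPl.1 hx0
        (fun y hy i hi j hj =>
          lt_of_le_of_lt (hM y hy i hi) (lt_of_lt_of_le (Nat.lt_succ_self M) (hbey j hj)))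
      have hmem : ∀ y ∈ l ++ [x], y ∈ spanSeq B := by
        intro y hy
        rcases List.mem_append.1 hy with h | h
        · exact hPl.2.1 y h
        · simp only [List.mem_singleton] at h
          exact h ▸ tail_le B (M + 1) hx
      by_contra hA
      push_neg at hA
      apply hnoext x
      refine ⟨hbl, hmem, fun A hAF => ?_⟩
      by_contra hne
      exact hA A hAF (snoc_escape (hPl.2.2 A hAF) hne)
    set U1 := spanList l ⊔ spanList (rApprox B (M + 1)) with hU1def
    have hU1 : FiniteDimensional 𝔽 U1 := findim_sup (spanList_findim l) (spanList_findim _)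
    have hcov : ∀ x ∈ spanSeq B, ∃ A ∈ F, x ∈ spanSeq A ⊔ U1 := by
      intro x hx
      obtain ⟨h, hh, t, ht, rfl⟩ := Submodule.mem_sup.1 (span_split B (M + 1) hx)
      by_cases ht0 : t = 0
      · obtain ⟨A, hA⟩ := hFne
        refine ⟨A, hA, ?_⟩
        rw [ht0, add_zero]
        exact Submodule.mem_sup_right (Submodule.mem_sup_right hh)
      · obtain ⟨A, hAF, htA⟩ := hcov0 t ht ht0
        refine ⟨A, hAF, Submodule.add_mem _ ?_ ?_⟩
        · exact Submodule.mem_sup_right (Submodule.mem_sup_right hh)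
        · exact (sup_le_sup_left (le_sup_left : spanList l ≤ U1) (spanSeq A)) htA
    obtain ⟨A, hAF, hle⟩ := lcover (spanSeq_not_findim hB) F (fun A => spanSeq A ⊔ U1) hcov
      (fun A hA A' hA' hne => pair_findim (hAD.2 A (hF hA) A' (hF hA') hne) hU1)
    exact ⟨A, hF hAF, U1, hU1, hle⟩

lemma diag_general (Q : ℕ → Submodule 𝔽 (EVec 𝔽))
    (hext : ∀ l : List (EVec 𝔽), IsBlockList l →
      (∀ i (h : i < l.length), l.get ⟨i, h⟩ ∈ Q i) →
      ∃ x, x ≠ 0 ∧ x ∈ Q l.length ∧ ∀ y ∈ l, BlockLt y x) :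
    ∃ B, IsBlockSeq B ∧ ∀ n, B n ∈ Q n := by
  have hb := build_seq
    (fun l => IsBlockList l ∧ ∀ i (h : i < l.length), l.get ⟨i, h⟩ ∈ Q i)
    ⟨blocklist_nil, by intro i h; simp at h⟩
    (by
      intro l hl
      obtain ⟨x, hx0, hxQ, hxlt⟩ := hext l hl.1 hl.2
      refine ⟨x, blocklist_snoc hl.1 hx0 hxlt, ?_⟩
      intro i h
      have h2 : i < l.length + 1 := by simpa using h
      rcases Nat.lt_or_ge i l.length with h' | h'
      · have he : (l ++ [x]).get ⟨i, h⟩ = l.get ⟨i, h'⟩ := by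
          simp [List.get_eq_getElem, List.getElem_append_left h']
        rw [he]
        exact hl.2 i h'
      · have hi : i = l.length := by omega
        subst hi
        have he : (l ++ [x]).get ⟨l.length, h⟩ = x := by
          simp [List.get_eq_getElem]
        rw [he]
        exact hxQ)
  obtain ⟨f, hf⟩ := hb
  refine ⟨f, blockseq_of_prefixes (fun n => (hf n).1), fun n => ?_⟩
  have h := (hf (n + 1)).2 n (by rw [length_rApprox]; omega)
  rwa [rApprox_get] at h

lemma pprop {𝒜 : Set (ℕ → EVec 𝔽)} (hAD : ADFamily 𝒜) : PProp (HMinus 𝒜) := by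
  intro As hmem hdec
  have hblk : ∀ n, IsBlockSeq (As n) := fun n => (hmem n).1
  have hle : ∀ {n m : ℕ}, n ≤ m → spanSeq (As m) ≤ spanSeq (As n) := by
    intro n m h
    induction h with
    | refl => exact le_rfl
    | step _ ih => exact le_trans (hdec _) ih
  have hWD : ∀ B : ℕ → EVec 𝔽, (∀ n, B n ∈ spanSeq (As n)) → WeakDiag As B := by
    intro B hBd
    constructor
    · show spanSeq B ≤ spanSeq (As 0)
      exact spanSeq_le_of_mem fun k => hle (Nat.zero_le k) (hBd k)
    · intro n
      refine ⟨n, ?_⟩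
      show spanSeq (tailSeq B n) ≤ spanSeq (As n)
      exact spanSeq_le_of_mem fun k => hle (Nat.le_add_left n k) (hBd (k + n))
  have hpos : ∀ (n : ℕ) (A : ℕ → EVec 𝔽), A ∈ 𝒜 → ∀ U : Submodule 𝔽 (EVec 𝔽),
      FiniteDimensional 𝔽 U → ¬ (spanSeq (As n) ≤ spanSeq A ⊔ U) := by
    intro n A hA𝒜 U hU hcont
    refine (hmem n).2 ⟨{A}, by simpa using hA𝒜, ?_⟩
    rintro ⟨C, hCblk, hCsub⟩
    have hCle : spanSeq C ≤ spanSeq (As n) := spanSeq_le_of_mem fun k =>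
      (hCsub (C k) (mem_spanSeq_self C k) (hCblk.1 k)).1
    have hCA : spanSeq C ⊓ spanSeq A = ⊥ := by
      rw [Submodule.eq_bot_iff]
      intro x hx
      rw [Submodule.mem_inf] at hx
      by_contra hx0
      obtain ⟨_, hnx⟩ := hCsub x hx.1 hx0
      apply hnx
      simp only [Set.mem_iUnion, SetLike.mem_coe]
      exact ⟨A, Finset.mem_singleton_self A, hx.2⟩
    have hfd : FiniteDimensional 𝔽 (spanSeq C) := by
      refine fmaster (V := spanSeq A) (U := U) (le_trans hCle hcont) hU ?_
      rw [hCA]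
      infer_instance
    exact spanSeq_not_findim hCblk hfd
  have hplain : ∃ B, IsBlockSeq B ∧ ∀ n, B n ∈ spanSeq (As n) := by
    apply diag_general
    intro l hbl hmem0
    obtain ⟨M, hM⟩ := list_bound l
    refine ⟨As l.length (M + 1), (hblk _).1 _, mem_spanSeq_self _ _, ?_⟩
    intro y hy i hi j hj
    have := minIdx (hblk l.length) (M + 1) j hj
    have := hM y hy i hi
    omega
  have havoid : ∀ A, A ∈ 𝒜 → ∃ B, IsBlockSeq B ∧ (∀ n, B n ∈ spanSeq (As n)) ∧
      spanSeq B ⊓ spanSeq A = ⊥ := by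
    intro A hA𝒜
    have hb := build_seq (fun l =>
        (IsBlockList l ∧ ∀ i (h : i < l.length), l.get ⟨i, h⟩ ∈ spanSeq (As i)) ∧
          spanList l ⊓ spanSeq A = ⊥)
      ⟨⟨blocklist_nil, by intro i h; simp at h⟩, by rw [spanList_nil, bot_inf_eq]⟩
      (by
        intro l hl
        obtain ⟨M, hM⟩ := list_bound l
        by_contra hno
        push_neg at hno
        have hcont : spanSeq (tailSeq (As l.length) (M + 1)) ≤ spanSeq A ⊔ spanList l := by
          intro x hx
          by_cases hx0 : x = 0
          · rw [hx0]; exact Submodule.zero_mem _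
          have hbey := supp_ge_of_mem_tail (hblk l.length) hx
          have hbl : IsBlockList (l ++ [x]) := blocklist_snoc hl.1.1 hx0
            (fun y hy i hi j hj =>
              lt_of_le_of_lt (hM y hy i hi) (lt_of_lt_of_le (Nat.lt_succ_self M) (hbey j hj)))
          have hmem2 : ∀ i (h : i < (l ++ [x]).length),
              (l ++ [x]).get ⟨i, h⟩ ∈ spanSeq (As i) := by
            intro i h
            have h2 : i < l.length + 1 := by simpa using h
            rcases Nat.lt_or_ge i l.length with h' | h'
            · have he : (l ++ [x]).get ⟨i, h⟩ = l.get ⟨i, h'⟩ := by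
                simp [List.get_eq_getElem, List.getElem_append_left h']
              rw [he]
              exact hl.1.2 i h'
            · have hi : i = l.length := by omega
              subst hi
              have he : (l ++ [x]).get ⟨l.length, h⟩ = x := by
                simp [List.get_eq_getElem]
              rw [he]
              exact tail_le _ _ hx
          have hfail : spanList (l ++ [x]) ⊓ spanSeq A ≠ ⊥ :=
            fun hb2 => by have hbl' := hbl; obtain ⟨hbl1, hbl2⟩ := hbl'; have hx := hno x; tauto
          exact snoc_escape hl.2 hfail
        refine hpos l.length A hA𝒜 (spanList l ⊔ spanList (rApprox (As l.length) (M + 1)))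
          (findim_sup (spanList_findim _) (spanList_findim _)) ?_
        intro x hx
        obtain ⟨h, hh, t, ht, rfl⟩ := Submodule.mem_sup.1 (span_split (As l.length) (M + 1) hx)
        refine Submodule.add_mem _ ?_ ?_
        · exact Submodule.mem_sup_right (Submodule.mem_sup_right hh)
        · refine (sup_le_sup_left ?_ (spanSeq A)) (hcont ht)
          exact (le_sup_left : spanList l ≤ spanList l ⊔ spanList (rApprox (As l.length) (M + 1))))
    obtain ⟨f, hf⟩ := hb
    refine ⟨f, blockseq_of_prefixes (fun n => (hf n).1.1), fun n => ?_, ?_⟩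
    · have h := (hf (n + 1)).1.2 n (by rw [length_rApprox]; omega)
      rwa [rApprox_get] at h
    · rw [Submodule.eq_bot_iff]
      intro x hx
      rw [Submodule.mem_inf] at hx
      obtain ⟨m, hxm⟩ := exists_prefix_of_mem hx.1
      have hxb : x ∈ spanList (rApprox f m) ⊓ spanSeq A := ⟨hxm, hx.2⟩
      rw [(hf m).2] at hxb
      simpa using hxb
  by_cases hgood : ∃ B, (IsBlockSeq B ∧ ∀ n, B n ∈ spanSeq (As n)) ∧ B ∈ HMinus 𝒜
  · obtain ⟨B, ⟨hBblk, hBd⟩, hBH⟩ := hgood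
    exact ⟨B, hBH, hWD B hBd⟩
  · exfalso
    push_neg at hgood
    have hbadall : ∀ B, IsBlockSeq B → (∀ n, B n ∈ spanSeq (As n)) →
        MemI 𝒜 (spanSeq B : Set (EVec 𝔽)) := by
      intro B h1 h2
      by_contra h
      exact hgood B ⟨h1, h2⟩ ⟨h1, h⟩
    obtain ⟨D, hDblk, hDd⟩ := hplain
    obtain ⟨Ast, hAst, Ust, hUst, hDle⟩ := bad_single hAD hDblk (hbadall D hDblk hDd)
    obtain ⟨B', hB'blk, hB'd, hB'av⟩ := havoid Ast hAst
    obtain ⟨C, hCblk, hCd⟩ := diag_general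
      (fun n => spanSeq (As n) ⊓ (if Even n then spanSeq D else spanSeq B'))
      (by
        intro l hbl hmem0
        obtain ⟨M, hM⟩ := list_bound l
        by_cases he : Even l.length
        · refine ⟨D (max l.length (M + 1)), hDblk.1 _, ?_, ?_⟩
          · show D (max l.length (M + 1)) ∈ spanSeq (As l.length) ⊓
              (if Even l.length then spanSeq D else spanSeq B')
            rw [Submodule.mem_inf, if_pos he]
            exact ⟨hle (le_max_left _ _) (hDd _), mem_spanSeq_self D _⟩
          · intro y hy i hi j hj
            have h1 := minIdx hDblk (max l.length (M + 1)) j hj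
            have h2 := hM y hy i hi
            have h3 := le_max_right l.length (M + 1)
            omega
        · refine ⟨B' (max l.length (M + 1)), hB'blk.1 _, ?_, ?_⟩
          · show B' (max l.length (M + 1)) ∈ spanSeq (As l.length) ⊓
              (if Even l.length then spanSeq D else spanSeq B')
            rw [Submodule.mem_inf, if_neg he]
            exact ⟨hle (le_max_left _ _) (hB'd _), mem_spanSeq_self B' _⟩
          · intro y hy i hi j hj
            have h1 := minIdx hB'blk (max l.length (M + 1)) j hj
            have h2 := hM y hy i hi
            have h3 := le_max_right l.length (M + 1)
            omega)
    have hCAs : ∀ n, C n ∈ spanSeq (As n) := fun n => (Submodule.mem_inf.1 (hCd n)).1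
    have hCe : ∀ j, C (2 * j) ∈ spanSeq D := by
      intro j
      have h := (Submodule.mem_inf.1 (hCd (2 * j))).2
      rwa [if_pos (even_two_mul j)] at h
    have hCo : ∀ j, C (2 * j + 1) ∈ spanSeq B' := by
      intro j
      have h := (Submodule.mem_inf.1 (hCd (2 * j + 1))).2
      rwa [if_neg (by simp [Nat.even_add_one, parity_simps])] at h
    obtain ⟨A3, hA3, U3, hU3, hCle⟩ := bad_single hAD hCblk (hbadall C hCblk hCAs)
    have hSeblk : IsBlockSeq (fun j => C (2 * j)) :=
      comp_blockseq hCblk (fun a b h => by omega)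
    have hSoblk : IsBlockSeq (fun j => C (2 * j + 1)) :=
      comp_blockseq hCblk (fun a b h => by omega)
    have hSeC : spanSeq (fun j => C (2 * j)) ≤ spanSeq C :=
      spanSeq_le_of_mem fun j => mem_spanSeq_self C (2 * j)
    have hSoC : spanSeq (fun j => C (2 * j + 1)) ≤ spanSeq C :=
      spanSeq_le_of_mem fun j => mem_spanSeq_self C _
    have hSeD : spanSeq (fun j => C (2 * j)) ≤ spanSeq D := spanSeq_le_of_mem hCe
    have hSoB' : spanSeq (fun j => C (2 * j + 1)) ≤ spanSeq B' := spanSeq_le_of_mem hCo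
    have h1 : ¬ FiniteDimensional 𝔽 ↥(spanSeq (fun j => C (2 * j)) ⊓ spanSeq A3) := by
      intro h
      exact spanSeq_not_findim hSeblk (fmaster (le_trans hSeC hCle) hU3 h)
    have h2 : ¬ FiniteDimensional 𝔽
        ↥((spanSeq (fun j => C (2 * j)) ⊓ spanSeq A3) ⊓ spanSeq Ast) := by
      intro h
      exact h1 (fmaster (V := spanSeq Ast) (U := Ust)
        (le_trans (le_trans inf_le_left hSeD) hDle) hUst h)
    have hA3eq : A3 = Ast := by
      by_contra hne
      have hfd : FiniteDimensional 𝔽 ↥(spanSeq A3 ⊓ spanSeq Ast) := hAD.2 A3 hA3 Ast hAst hne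
      apply h2
      haveI := hfd
      refine Submodule.finiteDimensional_of_le (S₂ := spanSeq A3 ⊓ spanSeq Ast) ?_
      intro x hx
      rw [Submodule.mem_inf] at hx ⊢
      exact ⟨(Submodule.mem_inf.1 hx.1).2, hx.2⟩
    apply spanSeq_not_findim hSoblk
    refine fmaster (V := spanSeq Ast) (U := U3) ?_ hU3 ?_
    · rw [hA3eq] at hCle
      exact le_trans hSoC hCle
    · have hbot : spanSeq (fun j => C (2 * j + 1)) ⊓ spanSeq Ast = ⊥ := by
        rw [Submodule.eq_bot_iff]
        intro x hx
        rw [Submodule.mem_inf] at hx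
        have hxm : x ∈ spanSeq B' ⊓ spanSeq Ast := ⟨hSoB' hx.1, hx.2⟩
        rw [hB'av] at hxm
        simpa using hxm
      rw [hbot]
      infer_instance

end S12

/-- for an almost disjoint family `𝒜`, `H⁻(𝒜)` is a (p)-semicoideal. -/
theorem statement12 [Countable 𝔽] (𝒜 : Set (ℕ → EVec 𝔽)) (hAD : ADFamily 𝒜) :
    Semicoideal (HMinus 𝒜) ∧ PProp (HMinus 𝒜) := by
  exact ⟨S12.semico 𝒜, S12.pprop hAD⟩
end
end

section
/- Let 𝒜 ⊆ E^[∞] be an almost disjoint family. Then H^-(𝒜) is a selective semicoideal: for every A ∈ H^-(𝒜) and every ≤-decreasing sequence (A_n)_{n<ω} in H^-(𝒜) with A₀ ≤ A, there exists B ∈ H^-(𝒜) with B ≤ A such that B/n ≤ A_{d_A(r_n(B))} for all n < ω. -/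
noncomputable section

variable {𝔽 : Type} [Field 𝔽]

/-! ### Auxiliary lemmas for Statement 13 -/

set_option maxHeartbeats 1000000
set_option synthInstance.maxHeartbeats 400000

/-- The submodule of vectors supported in `S`. -/
def suppIn (𝔽 : Type) [Field 𝔽] (S : Set ℕ) : Submodule 𝔽 (EVec 𝔽) where
  carrier := {x | ∀ i ∈ x.support, i ∈ S}
  add_mem' := by
    intro a b ha hb i hi
    rcases Finset.mem_union.mp (Finsupp.support_add hi) with h | h
    · exact ha i h
    · exact hb i h
  zero_mem' := by intro i hi; simp at hi
  smul_mem' := by intro c x hx i hi; exact hx i (Finsupp.support_smul hi)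

lemma span_le_suppIn {s : Set (EVec 𝔽)} {S : Set ℕ}
    (h : ∀ y ∈ s, ∀ i ∈ y.support, i ∈ S) : Submodule.span 𝔽 s ≤ suppIn 𝔽 S :=
  Submodule.span_le.mpr h

lemma blockSeq_supp_ge {A : ℕ → EVec 𝔽} (hA : IsBlockSeq A) :
    ∀ n, ∀ i ∈ (A n).support, n ≤ i := by
  intro n
  induction n with
  | zero => simp
  | succ n ih =>
    intro i hi
    obtain ⟨j, hj⟩ := Finsupp.support_nonempty_iff.mpr (hA.1 n)
    exact Nat.succ_le_of_lt (lt_of_le_of_lt (ih j hj)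
      (hA.2 n (n+1) (Nat.lt_succ_self n) j hj i hi))

lemma spanSeq_tail_le (A : ℕ → EVec 𝔽) (N : ℕ) :
    spanSeq (tailSeq A N) ≤ spanSeq A :=
  Submodule.span_mono (by rintro _ ⟨n, rfl⟩; exact ⟨n + N, rfl⟩)

lemma tail_supp_ge {C : ℕ → EVec 𝔽} (hC : IsBlockSeq C) (N : ℕ) {x : EVec 𝔽}
    (hx : x ∈ spanSeq (tailSeq C N)) : ∀ i ∈ x.support, N ≤ i := by
  have : x ∈ suppIn 𝔽 {i | N ≤ i} := by
    refine span_le_suppIn ?_ hx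
    rintro _ ⟨n, rfl⟩ i hi
    exact le_trans (Nat.le_add_left N n) (blockSeq_supp_ge hC (n+N) i hi)
  exact this

lemma spanSeq_eq_sup (A : ℕ → EVec 𝔽) (N : ℕ) :
    spanSeq A = Submodule.span 𝔽 (A '' {m | m < N}) ⊔ spanSeq (tailSeq A N) := by
  rw [spanSeq, spanSeq, ← Submodule.span_union]
  congr 1
  ext x
  constructor
  · rintro ⟨n, rfl⟩
    rcases lt_or_ge n N with h | h
    · exact Or.inl ⟨n, h, rfl⟩
    · exact Or.inr ⟨n - N, by simp [tailSeq, Nat.sub_add_cancel h]⟩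
  · rintro (⟨n, _, rfl⟩ | ⟨n, rfl⟩)
    exacts [⟨n, rfl⟩, ⟨n + N, rfl⟩]

lemma mem_tail_of_high {A : ℕ → EVec 𝔽} (hA : IsBlockSeq A) {x : EVec 𝔽} {N : ℕ}
    (hx : x ∈ spanSeq A)
    (hh : ∀ m < N, ∀ i ∈ (A m).support, ∀ j ∈ x.support, i < j) :
    x ∈ spanSeq (tailSeq A N) := by
  rw [spanSeq_eq_sup A N] at hx
  obtain ⟨u, hu, v, hv, hxuv⟩ := Submodule.mem_sup.mp hx
  set T : Set ℕ := {j | ∀ m < N, ∀ i ∈ (A m).support, i < j} with hT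
  have hvT : v ∈ suppIn 𝔽 T := by
    refine span_le_suppIn ?_ hv
    rintro _ ⟨n, rfl⟩ j hj m hm i hi
    exact hA.2 m (n + N) (lt_of_lt_of_le hm (Nat.le_add_left N n)) i hi j hj
  have hxT : x ∈ suppIn 𝔽 T := fun j hj m hm i hi => hh m hm i hi j hj
  have huT : u ∈ suppIn 𝔽 T := by
    have : u = x - v := by rw [← hxuv]; abel
    rw [this]; exact sub_mem hxT hvT
  have hulow : u ∈ suppIn 𝔽 (⋃ m ∈ {m : ℕ | m < N}, ((A m).support : Set ℕ)) := by
    refine span_le_suppIn ?_ hu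
    rintro _ ⟨m, hm, rfl⟩ i hi
    simp only [Set.mem_iUnion]
    exact ⟨m, hm, hi⟩
  have hu0 : u = 0 := by
    by_contra h0
    obtain ⟨i, hi⟩ := Finsupp.support_nonempty_iff.mpr h0
    have h1 := hulow i hi
    simp only [Set.mem_iUnion] at h1
    obtain ⟨m, hm, him⟩ := h1
    exact lt_irrefl i (huT i hi m hm i him)
  rw [← hxuv, hu0, zero_add]
  exact hv

lemma findim_supp_bound (V : Submodule 𝔽 (EVec 𝔽)) (h : FiniteDimensional 𝔽 V) :
    ∃ M, ∀ x ∈ V, ∀ i ∈ x.support, i ≤ M := by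
  obtain ⟨s, hs⟩ := (Submodule.fg_iff_finiteDimensional V).mpr h
  refine ⟨s.sup (fun y => y.support.sup id), ?_⟩
  intro x hx i hi
  rw [← hs] at hx
  have : x ∈ suppIn 𝔽 {i | i ≤ s.sup (fun y => y.support.sup id)} := by
    refine span_le_suppIn ?_ hx
    intro y hy j hj
    exact le_trans (Finset.le_sup (f := id) hj)
      (Finset.le_sup (f := fun y : EVec 𝔽 => y.support.sup id) hy)
  exact this i hi

lemma exists_fin_linIndep {Mo : Type} [AddCommGroup Mo] [Module 𝔽 Mo]
    (hr : ¬ Module.rank 𝔽 Mo < Cardinal.aleph0) (n : ℕ) :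
    ∃ v : Fin n → Mo, LinearIndependent 𝔽 v := by
  induction n with
  | zero => exact ⟨fun _ => 0, linearIndependent_empty_type⟩
  | succ n ih =>
    obtain ⟨v, hv⟩ := ih
    obtain ⟨x, hx⟩ := exists_linearIndependent_cons_of_lt_rank hv
      (lt_of_lt_of_le (Cardinal.nat_lt_aleph0 n) (not_lt.mp hr))
    exact ⟨Fin.cons x v, hx⟩

lemma exists_high_avoid {V W : Submodule 𝔽 (EVec 𝔽)} (hV : ¬ FiniteDimensional 𝔽 V)
    (hW : FiniteDimensional 𝔽 W) (M : ℕ) :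
    ∃ x, x ∈ V ∧ x ∉ W ∧ ∀ i ∈ x.support, M < i := by
  classical
  haveI := hW
  have hrank : ¬ Module.rank 𝔽 ↥V < Cardinal.aleph0 := by
    intro h
    haveI : Module.Free 𝔽 ↥V := Module.Free.of_divisionRing 𝔽 ↥V
    exact hV (Module.rank_lt_aleph0_iff.mp h)
  set sW := Module.finrank 𝔽 ↥W with hsW
  set r : ℕ := (M+1) + (sW+1) with hr
  obtain ⟨u, hu⟩ := exists_fin_linIndep (𝔽 := 𝔽) (Mo := ↥V) hrank r
  set v : Fin r → EVec 𝔽 := fun i => (u i : EVec 𝔽) with hv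
  have hvind : LinearIndependent 𝔽 v := hu.map' V.subtype (Submodule.ker_subtype V)
  set χ : (Fin r → 𝔽) →ₗ[𝔽] EVec 𝔽 := Fintype.linearCombination 𝔽 v with hχ
  have hχapp : ∀ g, χ g = ∑ i, g i • v i := fun g => rfl
  have hχinj : Function.Injective χ := by
    intro a b hab
    have h1 : χ (a - b) = 0 := by rw [map_sub, hab, sub_self]
    rw [hχapp] at h1
    have h2 := Fintype.linearIndependent_iff.mp hvind (a - b) h1
    funext i
    have h3 := h2 i
    simpa [sub_eq_zero] using h3
  set ψ : (Fin r → 𝔽) →ₗ[𝔽] (Fin (M+1) → 𝔽) :=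
    LinearMap.pi (fun j : Fin (M+1) => (Finsupp.lapply ((j : ℕ))).comp χ) with hψ
  have hrn := LinearMap.finrank_range_add_finrank_ker ψ
  have hrange : Module.finrank 𝔽 ↥(LinearMap.range ψ) ≤ M + 1 := by
    calc Module.finrank 𝔽 ↥(LinearMap.range ψ) ≤ Module.finrank 𝔽 (Fin (M+1) → 𝔽) :=
          Submodule.finrank_le _
    _ = M + 1 := Module.finrank_fin_fun 𝔽
  have hfing : Module.finrank 𝔽 (Fin r → 𝔽) = r := Module.finrank_fin_fun 𝔽
  have hker : sW + 1 ≤ Module.finrank 𝔽 ↥(LinearMap.ker ψ) := by omega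
  set P := (LinearMap.ker ψ).map χ with hP
  have hPrank : Module.finrank 𝔽 ↥(LinearMap.ker ψ) = Module.finrank 𝔽 ↥P :=
    (Submodule.equivMapOfInjective χ hχinj (LinearMap.ker ψ)).finrank_eq
  have hnle : ¬ P ≤ W := by
    intro hle
    have hm := Submodule.finrank_mono hle
    omega
  obtain ⟨x, hxP, hxW⟩ := SetLike.not_le_iff_exists.mp hnle
  obtain ⟨g, hg, rfl⟩ := hxP
  refine ⟨χ g, ?_, hxW, ?_⟩
  · rw [hχapp]
    exact Submodule.sum_mem V (fun i _ => Submodule.smul_mem V _ (u i).2)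
  · intro i hi
    by_contra hle
    push_neg at hle
    have h0 : ψ g = 0 := hg
    have h1 := congrFun h0 ⟨i, Nat.lt_succ_of_le hle⟩
    simp only [hψ, LinearMap.pi_apply, LinearMap.comp_apply, Finsupp.lapply_apply,
      Pi.zero_apply] at h1
    exact Finsupp.mem_support_iff.mp hi h1

lemma blockSeq_not_findim {C : ℕ → EVec 𝔽} (hC : IsBlockSeq C) :
    ¬ FiniteDimensional 𝔽 (spanSeq C) := by
  intro h
  obtain ⟨M, hM⟩ := findim_supp_bound _ h
  obtain ⟨i, hi⟩ := Finsupp.support_nonempty_iff.mpr (hC.1 (M+1))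
  have hmem : C (M+1) ∈ spanSeq C := Submodule.subset_span ⟨M+1, rfl⟩
  have h1 := hM _ hmem i hi
  have h2 := blockSeq_supp_ge hC (M+1) i hi
  omega

lemma list_supp_bound (l : List (EVec 𝔽)) : ∃ M, ∀ y ∈ l, ∀ i ∈ y.support, i ≤ M := by
  induction l with
  | nil => exact ⟨0, by simp⟩
  | cons a l ih =>
    obtain ⟨M, hM⟩ := ih
    refine ⟨max (a.support.sup id) M, ?_⟩
    intro y hy i hi
    rcases List.mem_cons.mp hy with rfl | hy
    · exact le_max_of_le_left (Finset.le_sup (f := id) hi)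
    · exact le_max_of_le_right (hM y hy i hi)

lemma depth_mem {A : ℕ → EVec 𝔽} (hA : IsBlockSeq A) (a : List (EVec 𝔽)) :
    ∀ x ∈ a, ∀ k, depthIn A a ≤ k → BlockLt x (A k) := by
  have hne : {N | ∀ x ∈ a, ∀ k, N ≤ k → BlockLt x (A k)}.Nonempty := by
    obtain ⟨M, hM⟩ := list_supp_bound a
    refine ⟨M+1, fun x hx k hk i hi j hj => ?_⟩
    have h1 := hM x hx i hi
    have h2 := blockSeq_supp_ge hA k j hj
    omega
  exact Nat.sInf_mem hne

lemma depth_mono {A : ℕ → EVec 𝔽} (hA : IsBlockSeq A) {a b : List (EVec 𝔽)}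
    (h : ∀ x ∈ a, x ∈ b) : depthIn A a ≤ depthIn A b :=
  Nat.sInf_le (fun x hx k hk => depth_mem hA b x (h x hx) k hk)

lemma length_rApprox (b : ℕ → EVec 𝔽) (n : ℕ) : (rApprox b n).length = n := by
  simp [rApprox]

lemma mem_rApprox {b : ℕ → EVec 𝔽} {m n : ℕ} (h : m < n) : b m ∈ rApprox b n := by
  simp only [rApprox, List.mem_map]
  exact ⟨m, List.mem_range.mpr h, rfl⟩

lemma depth_unbounded {A b : ℕ → EVec 𝔽} (hA : IsBlockSeq A) (hb : IsBlockSeq b) (K : ℕ) :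
    ∃ n, K ≤ depthIn A (rApprox b n) := by
  obtain ⟨j, hj⟩ := Finsupp.support_nonempty_iff.mpr (hA.1 K)
  refine ⟨j + 2, ?_⟩
  by_contra h
  push_neg at h
  have hm := depth_mem hA (rApprox b (j+2)) (b (j+1)) (mem_rApprox (by omega)) K (le_of_lt h)
  obtain ⟨i, hi⟩ := Finsupp.support_nonempty_iff.mpr (hb.1 (j+1))
  have h1 := blockSeq_supp_ge hb (j+1) i hi
  have h2 := hm i hi j hj
  omega

lemma spanList_rApprox (b : ℕ → EVec 𝔽) (n : ℕ) :
    spanList (rApprox b n) = Submodule.span 𝔽 (b '' {m | m < n}) := by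
  rw [spanList]
  congr 1
  ext x
  constructor
  · intro hx
    simp only [rApprox, List.mem_map, List.mem_range] at hx
    obtain ⟨m, hm, rfl⟩ := hx
    exact ⟨m, hm, rfl⟩
  · rintro ⟨m, hm, rfl⟩
    simp only [rApprox, List.mem_map, List.mem_range]
    exact ⟨m, hm, rfl⟩

lemma mem_spanList_of_mem_spanSeq {b : ℕ → EVec 𝔽} {x : EVec 𝔽} (hx : x ∈ spanSeq b) :
    ∃ n, x ∈ spanList (rApprox b n) := by
  have hmono : Monotone (fun n => Submodule.span 𝔽 (b '' {m | m < n})) := by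
    intro m n hmn
    exact Submodule.span_mono (Set.image_mono (fun k hk => lt_of_lt_of_le hk hmn))
  have hle : spanSeq b ≤ ⨆ n, Submodule.span 𝔽 (b '' {m | m < n}) := by
    rw [spanSeq, Submodule.span_le]
    rintro _ ⟨m, rfl⟩
    exact le_iSup (fun n => Submodule.span 𝔽 (b '' {m | m < n})) (m+1)
      (Submodule.subset_span ⟨m, show m < m + 1 from Nat.lt_succ_self m, rfl⟩)
  have h2 := (Submodule.mem_iSup_of_chain
    ⟨fun n => Submodule.span 𝔽 (b '' {m | m < n}), hmono⟩ x).mp (hle hx)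
  obtain ⟨n, hn⟩ := h2
  exact ⟨n, by rw [spanList_rApprox]; exact hn⟩

lemma chain_le {As : ℕ → ℕ → EVec 𝔽} (h : ∀ n, SeqLe (As (n+1)) (As n))
    {m n : ℕ} (hmn : m ≤ n) : spanSeq (As n) ≤ spanSeq (As m) := by
  induction n, hmn using Nat.le_induction with
  | base => exact le_refl _
  | succ n hmn ih => exact le_trans (h n) ih

lemma isBlockSeq_tail {C : ℕ → EVec 𝔽} (hC : IsBlockSeq C) (N : ℕ) :
    IsBlockSeq (tailSeq C N) :=
  ⟨fun n => hC.1 _, fun m n h => hC.2 _ _ (by omega)⟩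

lemma isBlockSeq_comp {C : ℕ → EVec 𝔽} (hC : IsBlockSeq C) {g : ℕ → ℕ}
    (hg : StrictMono g) : IsBlockSeq (C ∘ g) :=
  ⟨fun n => hC.1 _, fun m n h => hC.2 _ _ (hg h)⟩

lemma bigset_tail {B C : ℕ → EVec 𝔽} (hC : IsBlockSeq C) (hCB : spanSeq C ≤ spanSeq B)
    (F : Finset (ℕ → EVec 𝔽))
    (hF : ∀ A'' ∈ F, ∃ M, ∀ x ∈ spanSeq C, x ∈ spanSeq A'' →
      (∀ i ∈ x.support, M < i) → x = 0) :
    BigSet ((spanSeq B : Set (EVec 𝔽)) \ ⋃ A ∈ F, (spanSeq A : Set (EVec 𝔽))) := by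
  choose M hM using hF
  set N := F.attach.sup (fun a => M a.1 a.2) + 1 with hN
  refine ⟨tailSeq C N, isBlockSeq_tail hC N, ?_⟩
  intro x hx hx0
  have hxC : x ∈ spanSeq C := spanSeq_tail_le C N hx
  have hsupp := tail_supp_ge hC N hx
  refine ⟨hCB hxC, ?_⟩
  intro hmem
  simp only [Set.mem_iUnion, SetLike.mem_coe] at hmem
  obtain ⟨A'', hA'', hxA⟩ := hmem
  refine hx0 (hM A'' hA'' x hxC hxA ?_)
  intro i hi
  have h1 := hsupp i hi
  have h2 : M A'' hA'' ≤ F.attach.sup (fun a => M a.1 a.2) :=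
    Finset.le_sup (f := fun a : {x // x ∈ F} => M a.1 a.2) (Finset.mem_attach F ⟨A'', hA''⟩)
  omega

lemma exists_rec_seq (Step : List (EVec 𝔽) → EVec 𝔽 → Prop)
    (hex : ∀ l, ∃ x, Step l x) :
    ∃ b : ℕ → EVec 𝔽, ∀ n, Step (rApprox b n) (b n) := by
  classical
  let f : List (EVec 𝔽) → EVec 𝔽 := fun l => (hex l).choose
  let H : ℕ → List (EVec 𝔽) := fun n => Nat.rec [] (fun _ l => l ++ [f l]) n
  refine ⟨fun n => f (H n), fun n => ?_⟩
  have key : ∀ n, H n = rApprox (fun n => f (H n)) n := by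
    intro n
    induction n with
    | zero => simp [rApprox, H]
    | succ n ih =>
      show H n ++ [f (H n)] = rApprox _ (n+1)
      rw [rApprox, List.range_succ, List.map_append]
      rw [rApprox] at ih
      rw [← ih]
      simp
  rw [← key n]
  exact (hex (H n)).choose_spec

lemma findim_inf_sup {V U S : Submodule 𝔽 (EVec 𝔽)} (hVU : V ⊓ U = ⊥)
    (hS : FiniteDimensional 𝔽 S) : FiniteDimensional 𝔽 ↥(V ⊓ (S ⊔ U)) := by
  classical
  haveI := hS
  set T := V ⊓ (S ⊔ U) with hT
  let ψ : ↥T →ₗ[𝔽] EVec 𝔽 ⧸ U := U.mkQ.comp T.subtype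
  have hrange : ∀ t : ↥T, ψ t ∈ S.map U.mkQ := by
    intro t
    have hx : (t : EVec 𝔽) ∈ S ⊔ U := t.2.2
    obtain ⟨s, hs, u, hu, hsu⟩ := Submodule.mem_sup.mp hx
    refine ⟨s, hs, ?_⟩
    have h0 : U.mkQ u = 0 := by
      rw [Submodule.mkQ_apply, Submodule.Quotient.mk_eq_zero]; exact hu
    show U.mkQ s = U.mkQ (t : EVec 𝔽)
    rw [← hsu, map_add, h0, add_zero]
  have hinj : Function.Injective (LinearMap.codRestrict (S.map U.mkQ) ψ hrange) := by
    intro a b hab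
    have h1 : ψ a = ψ b := congrArg Subtype.val hab
    have h2 : U.mkQ ((a : EVec 𝔽) - (b : EVec 𝔽)) = 0 := by
      rw [map_sub]
      have ha : U.mkQ (a : EVec 𝔽) = ψ a := rfl
      have hb : U.mkQ (b : EVec 𝔽) = ψ b := rfl
      rw [ha, hb, h1, sub_self]
    have h3 : (a : EVec 𝔽) - (b : EVec 𝔽) ∈ U := by
      rwa [Submodule.mkQ_apply, Submodule.Quotient.mk_eq_zero] at h2
    have h5 : (a : EVec 𝔽) - (b : EVec 𝔽) ∈ V ⊓ U := ⟨sub_mem a.2.1 b.2.1, h3⟩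
    rw [hVU] at h5
    exact Subtype.ext (sub_eq_zero.mp ((Submodule.mem_bot 𝔽).mp h5))
  exact FiniteDimensional.of_injective _ hinj

lemma findim_finset_sup {ι : Type} (s : Finset ι) (f : ι → Submodule 𝔽 (EVec 𝔽))
    (h : ∀ i ∈ s, FiniteDimensional 𝔽 (f i)) : FiniteDimensional 𝔽 ↥(s.sup f) := by
  classical
  refine @Finset.sup_induction _ _ _ _ s f (fun p => FiniteDimensional 𝔽 ↥p)
    (finiteDimensional_bot 𝔽 (EVec 𝔽)) ?_ h
  intro a ha b hb
  haveI := ha; haveI := hb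
  exact Submodule.finiteDimensional_sup a b

/-- for an almost disjoint family `𝒜`, `H⁻(𝒜)` is a selective
semicoideal. -/
theorem statement13 [Countable 𝔽] (𝒜 : Set (ℕ → EVec 𝔽)) (hAD : ADFamily 𝒜) :
    Semicoideal (HMinus 𝒜) ∧ SelectiveFam (HMinus 𝒜) := by
  classical
  constructor
  · -- Semicoideal
    refine ⟨fun A hA => hA.1, ?_⟩
    intro A hA B hB hstar
    refine ⟨hB, ?_⟩
    rintro ⟨F, hF𝒜, hsmall⟩
    obtain ⟨N, hle⟩ := hstar
    apply hA.2
    refine ⟨F, hF𝒜, ?_⟩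
    intro hbig
    obtain ⟨C, hC, hCsub⟩ := hbig
    obtain ⟨M₀, hM₀⟩ := list_supp_bound (rApprox A N)
    refine hsmall ⟨tailSeq C (M₀+1), isBlockSeq_tail hC _, ?_⟩
    intro x hx hx0
    have hxC : x ∈ spanSeq C := spanSeq_tail_le _ _ hx
    have hxhigh := tail_supp_ge hC (M₀+1) hx
    obtain ⟨hxA, hxU⟩ := hCsub x hxC hx0
    have hxtail : x ∈ spanSeq (tailSeq A N) := by
      refine mem_tail_of_high hA.1 hxA ?_
      intro m hm i hi j hj
      have h1 := hM₀ (A m) (mem_rApprox hm) i hi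
      have h2 := hxhigh j hj
      omega
    exact ⟨hle hxtail, hxU⟩
  · -- Selective
    intro A hA As hAs hchain h0A
    by_cases hinf : {A' | A' ∈ 𝒜 ∧
        ∀ n, ¬ FiniteDimensional 𝔽 ↥(spanSeq A' ⊓ spanSeq (As n))}.Infinite
    · -- Case A : infinitely many members of 𝒜 meet every As n infinitely
      have hEnum : ∃ AA : ℕ → (ℕ → EVec 𝔽), Function.Injective AA ∧
          ∀ k, AA k ∈ 𝒜 ∧ ∀ n, ¬ FiniteDimensional 𝔽 ↥(spanSeq (AA k) ⊓ spanSeq (As n)) := by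
        let e := hinf.natEmbedding
        refine ⟨fun k => ((e k : {A' | A' ∈ 𝒜 ∧
          ∀ n, ¬ FiniteDimensional 𝔽 ↥(spanSeq A' ⊓ spanSeq (As n))}) : ℕ → EVec 𝔽), ?_, ?_⟩
        · intro a b hab
          exact e.injective (Subtype.ext hab)
        · intro k
          exact (e k).2
      obtain ⟨AA, hAAinj, hAAprop⟩ := hEnum
      have hex : ∀ l : List (EVec 𝔽), ∃ x : EVec 𝔽,
          x ∈ spanSeq (AA (Nat.unpair l.length).1) ⊓ spanSeq (As (depthIn A l)) ∧
          x ≠ 0 ∧ ∀ y ∈ l, BlockLt y x := by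
        intro l
        obtain ⟨M, hM⟩ := list_supp_bound l
        obtain ⟨x, hxV, hxW, hxhigh⟩ := exists_high_avoid
          ((hAAprop (Nat.unpair l.length).1).2 (depthIn A l))
          (finiteDimensional_bot 𝔽 (EVec 𝔽)) M
        refine ⟨x, hxV, fun h0 => hxW ((Submodule.mem_bot 𝔽).mpr h0), ?_⟩
        intro y hy i hi j hj
        have h1 := hM y hy i hi
        have h2 := hxhigh j hj
        omega
      obtain ⟨b, hb⟩ := exists_rec_seq _ hex
      have hb0 : ∀ n, b n ≠ 0 := fun n => (hb n).2.1
      have hblt : ∀ m n, m < n → BlockLt (b m) (b n) :=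
        fun m n h => (hb n).2.2 (b m) (mem_rApprox h)
      have hB : IsBlockSeq b := ⟨hb0, hblt⟩
      have hbAs : ∀ n, b n ∈ spanSeq (As (depthIn A (rApprox b n))) := fun n => (hb n).1.2
      have hbU : ∀ n, b n ∈ spanSeq (AA (Nat.unpair n).1) := by
        intro n
        have h1 := (hb n).1.1
        rwa [length_rApprox] at h1
      have hdmono : ∀ {m n : ℕ}, m ≤ n →
          depthIn A (rApprox b m) ≤ depthIn A (rApprox b n) := by
        intro m n hmn
        refine depth_mono hA.1 ?_
        intro x hx
        simp only [rApprox, List.mem_map, List.mem_range] at hx ⊢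
        obtain ⟨k, hk, rfl⟩ := hx
        exact ⟨k, by omega, rfl⟩
      have htail : ∀ n, SeqLe (tailSeq b n) (As (depthIn A (rApprox b n))) := by
        intro n
        rw [SeqLe, spanSeq, Submodule.span_le]
        rintro _ ⟨j, rfl⟩
        exact chain_le hchain (hdmono (Nat.le_add_left n j)) (hbAs (j+n))
      have hBA : SeqLe b A := by
        rw [SeqLe, spanSeq, Submodule.span_le]
        rintro _ ⟨n, rfl⟩
        exact h0A (chain_le hchain (Nat.zero_le _) (hbAs n))
      refine ⟨b, ⟨hB, ?_⟩, hBA, htail⟩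
      rintro ⟨F, hF𝒜, hsmall⟩
      have hfin : (AA ⁻¹' (F : Set (ℕ → EVec 𝔽))).Finite :=
        Set.Finite.preimage hAAinj.injOn F.finite_toSet
      obtain ⟨k, hk⟩ := hfin.infinite_compl.nonempty
      apply hsmall
      have hmono : StrictMono (fun j => Nat.pair k j) :=
        fun i j h => Nat.pair_lt_pair_right k h
      refine bigset_tail (B := b) (C := b ∘ fun j => Nat.pair k j)
        (isBlockSeq_comp hB hmono) ?_ F ?_
      · refine Submodule.span_mono ?_
        rintro _ ⟨j, rfl⟩
        exact ⟨Nat.pair k j, rfl⟩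
      · intro A'' hA''F
        have hne : AA k ≠ A'' := by
          intro h
          exact hk (by rw [Set.mem_preimage, h]; exact hA''F)
        have hfd : FiniteDimensional 𝔽 ↥(spanSeq (AA k) ⊓ spanSeq A'') :=
          hAD.2 _ (hAAprop k).1 A'' (hF𝒜 hA''F) hne
        obtain ⟨M, hM⟩ := findim_supp_bound _ hfd
        refine ⟨M, ?_⟩
        intro x hxC hxA hhigh
        have hCle : spanSeq (b ∘ fun j => Nat.pair k j) ≤ spanSeq (AA k) := by
          rw [spanSeq, Submodule.span_le]
          rintro _ ⟨j, rfl⟩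
          have h1 := hbU (Nat.pair k j)
          rwa [Nat.unpair_pair] at h1
        by_contra h0
        obtain ⟨i, hi⟩ := Finsupp.support_nonempty_iff.mpr h0
        have h1 := hM x ⟨hCle hxC, hxA⟩ i hi
        have h2 := hhigh i hi
        omega
    · -- Case B : only finitely many such members
      have hfin : Set.Finite {A' | A' ∈ 𝒜 ∧
          ∀ n, ¬ FiniteDimensional 𝔽 ↥(spanSeq A' ⊓ spanSeq (As n))} := Set.not_infinite.mp hinf
      set F₀ := hfin.toFinset with hF₀def
      have hF₀𝒜 : (F₀ : Set (ℕ → EVec 𝔽)) ⊆ 𝒜 := by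
        intro A' hA'
        exact (hfin.mem_toFinset.mp hA').1
      have hw : ∀ m, ∃ C, IsBlockSeq C ∧ SpanSub C
          ((spanSeq (As m) : Set (EVec 𝔽)) \ ⋃ A ∈ F₀, (spanSeq A : Set (EVec 𝔽))) := by
        intro m
        by_contra h
        exact (hAs m).2 ⟨F₀, hF₀𝒜, h⟩
      choose W hWblock hWsub using hw
      have hWle : ∀ m, spanSeq (W m) ≤ spanSeq (As m) := by
        intro m x hx
        by_cases h0 : x = 0
        · rw [h0]; exact Submodule.zero_mem _
        · exact (hWsub m x hx h0).1
      have hWdisj : ∀ m, ∀ A' ∈ F₀, ∀ x ∈ spanSeq (W m), x ∈ spanSeq A' → x = 0 := by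
        intro m A' hA' x hx hxA
        by_contra h0
        refine (hWsub m x hx h0).2 ?_
        simp only [Set.mem_iUnion]
        exact ⟨A', hA', hxA⟩
      have hex : ∀ l : List (EVec 𝔽), ∃ x : EVec 𝔽,
          x ∈ spanSeq (W (depthIn A l)) ∧
          (∀ A' ∈ F₀, x ∉ spanList l ⊔ spanSeq A') ∧
          x ≠ 0 ∧ ∀ y ∈ l, BlockLt y x := by
        intro l
        obtain ⟨M, hM⟩ := list_supp_bound l
        have hSfin : FiniteDimensional 𝔽 (spanList l) :=
          FiniteDimensional.span_of_finite 𝔽 l.finite_toSet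
        have hXfd : FiniteDimensional 𝔽 ↥(F₀.sup (fun A' =>
            (spanSeq (W (depthIn A l)) ⊓ suppIn 𝔽 {i | M < i}) ⊓
              (spanList l ⊔ spanSeq A'))) := by
          refine findim_finset_sup F₀ _ ?_
          intro A' hA'
          refine findim_inf_sup ?_ hSfin
          rw [Submodule.eq_bot_iff]
          rintro x ⟨⟨hx1, _⟩, hx2⟩
          exact hWdisj _ A' hA' x hx1 hx2
        obtain ⟨x, hxV, hxX, hxhigh⟩ := exists_high_avoid
          (blockSeq_not_findim (hWblock (depthIn A l))) hXfd M
        have hx0 : x ≠ 0 := by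
          intro h0
          apply hxX
          rw [h0]
          exact Submodule.zero_mem _
        refine ⟨x, hxV, ?_, hx0, ?_⟩
        · intro A' hA' hmem
          apply hxX
          refine Finset.le_sup (f := fun A' =>
            (spanSeq (W (depthIn A l)) ⊓ suppIn 𝔽 {i | M < i}) ⊓
              (spanList l ⊔ spanSeq A')) hA' ⟨⟨hxV, hxhigh⟩, hmem⟩
        · intro y hy i hi j hj
          have h1 := hM y hy i hi
          have h2 := hxhigh j hj
          omega
      obtain ⟨b, hb⟩ := exists_rec_seq _ hex
      have hb0 : ∀ n, b n ≠ 0 := fun n => (hb n).2.2.1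
      have hblt : ∀ m n, m < n → BlockLt (b m) (b n) :=
        fun m n h => (hb n).2.2.2 (b m) (mem_rApprox h)
      have hB : IsBlockSeq b := ⟨hb0, hblt⟩
      have hbAs : ∀ n, b n ∈ spanSeq (As (depthIn A (rApprox b n))) :=
        fun n => hWle _ (hb n).1
      have hdmono : ∀ {m n : ℕ}, m ≤ n →
          depthIn A (rApprox b m) ≤ depthIn A (rApprox b n) := by
        intro m n hmn
        refine depth_mono hA.1 ?_
        intro x hx
        simp only [rApprox, List.mem_map, List.mem_range] at hx ⊢
        obtain ⟨k, hk, rfl⟩ := hx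
        exact ⟨k, by omega, rfl⟩
      have htail : ∀ n, SeqLe (tailSeq b n) (As (depthIn A (rApprox b n))) := by
        intro n
        rw [SeqLe, spanSeq, Submodule.span_le]
        rintro _ ⟨j, rfl⟩
        exact chain_le hchain (hdmono (Nat.le_add_left n j)) (hbAs (j+n))
      have hBA : SeqLe b A := by
        rw [SeqLe, spanSeq, Submodule.span_le]
        rintro _ ⟨n, rfl⟩
        exact h0A (chain_le hchain (Nat.zero_le _) (hbAs n))
      have hinv : ∀ n, ∀ A' ∈ F₀, ∀ x ∈ spanList (rApprox b n), x ∈ spanSeq A' → x = 0 := by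
        intro n
        induction n with
        | zero =>
          intro A' hA' x hx _
          have h00 : spanList (rApprox b 0) = ⊥ := by
            have hempty : {x : EVec 𝔽 | x ∈ rApprox b 0} = ∅ := by
              ext y
              simp [rApprox]
            rw [spanList, hempty, Submodule.span_empty]
          rw [h00] at hx
          exact (Submodule.mem_bot 𝔽).mp hx
        | succ n ih =>
          intro A' hA' x hx hxA
          have hset : {y : EVec 𝔽 | y ∈ rApprox b (n+1)} = {y | y ∈ rApprox b n} ∪ {b n} := by
            ext y
            simp only [Set.mem_setOf_eq, Set.mem_union, Set.mem_singleton_iff, rApprox,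
              List.range_succ, List.map_append, List.mem_append, List.map_cons, List.map_nil,
              List.mem_map, List.mem_range, List.mem_cons, List.not_mem_nil, or_false]
          have hsplit : spanList (rApprox b (n+1)) =
              spanList (rApprox b n) ⊔ Submodule.span 𝔽 {b n} := by
            rw [spanList, hset, Submodule.span_union, spanList]
          rw [hsplit] at hx
          obtain ⟨u, hu, v, hv, huv⟩ := Submodule.mem_sup.mp hx
          obtain ⟨c, rfl⟩ := Submodule.mem_span_singleton.mp hv
          by_cases hc : c = 0
          · rw [hc, zero_smul, add_zero] at huv
            subst huv
            exact ih A' hA' u hu hxA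
          · exfalso
            refine (hb n).2.1 A' hA' ?_
            have hbn : b n = c⁻¹ • x - c⁻¹ • u := by
              rw [← huv, smul_add, smul_smul, inv_mul_cancel₀ hc, one_smul]
              abel
            rw [hbn]
            exact sub_mem (Submodule.mem_sup_right (Submodule.smul_mem _ _ hxA))
              (Submodule.mem_sup_left (Submodule.smul_mem _ _ hu))
      have hinv' : ∀ A' ∈ F₀, ∀ x ∈ spanSeq b, x ∈ spanSeq A' → x = 0 := by
        intro A' hA' x hx hxA
        obtain ⟨n, hn⟩ := mem_spanList_of_mem_spanSeq hx
        exact hinv n A' hA' x hn hxA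
      refine ⟨b, ⟨hB, ?_⟩, hBA, htail⟩
      rintro ⟨F, hF𝒜, hsmall⟩
      apply hsmall
      refine bigset_tail hB (le_refl _) F ?_
      intro A'' hA''F
      by_cases hin : A'' ∈ F₀
      · exact ⟨0, fun x hxb hxA _ => hinv' A'' hin x hxb hxA⟩
      · have hA''𝒜 : A'' ∈ 𝒜 := hF𝒜 hA''F
        have hnot : ¬ ∀ n, ¬ FiniteDimensional 𝔽 ↥(spanSeq A'' ⊓ spanSeq (As n)) :=
          fun h => hin (hfin.mem_toFinset.mpr ⟨hA''𝒜, h⟩)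
        push_neg at hnot
        obtain ⟨m, hm⟩ := hnot
        obtain ⟨n₀, hn₀⟩ := depth_unbounded hA.1 hB m
        obtain ⟨M₀, hM₀⟩ := list_supp_bound (rApprox b n₀)
        obtain ⟨M₁, hM₁⟩ := findim_supp_bound _ hm
        refine ⟨max M₀ M₁, ?_⟩
        intro x hxb hxA hhigh
        have hxtail : x ∈ spanSeq (tailSeq b n₀) := by
          refine mem_tail_of_high hB hxb ?_
          intro m' hm' i hi j hj
          have h1 := hM₀ (b m') (mem_rApprox hm') i hi
          have h2 := hhigh j hj
          omega
        have hxAs : x ∈ spanSeq (As m) := chain_le hchain hn₀ (htail n₀ hxtail)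
        by_contra h0
        obtain ⟨i, hi⟩ := Finsupp.support_nonempty_iff.mpr h0
        have h1 := hM₁ x ⟨hxA, hxAs⟩ i hi
        have h2 := hhigh i hi
        omega
end
end

section
/- Let A, B ∈ E^[∞]. (1) If ⟨A⟩ ∩ ⟨B⟩ is small, then ⟨A⟩ ∩ ⟨B⟩ is very small. (2) If ⟨A⟩ ∖ ⟨B⟩ is small, then ⟨A⟩ ∖ ⟨B⟩ is very small. Consequently, it is not possible that both ⟨A⟩ ∩ ⟨B⟩ and ⟨A⟩ ∖ ⟨B⟩ are small. -/
noncomputable section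

variable {𝔽 : Type} [Field 𝔽]

namespace Statement14Aux

variable {𝔽 : Type} [Field 𝔽]

/-- One more than the max of the support. -/
def bnd (x : EVec 𝔽) : ℕ := x.support.sup id + 1

lemma lt_bnd {x : EVec 𝔽} {i : ℕ} (hi : i ∈ x.support) : i < bnd x :=
  Nat.lt_succ_of_le (Finset.le_sup (f := id) hi)

lemma exists_nonzero_high (W : Submodule 𝔽 (EVec 𝔽)) (hW : ¬ FiniteDimensional 𝔽 W) (N : ℕ) :
    ∃ x, x ∈ W ∧ x ≠ 0 ∧ ∀ i ∈ x.support, N ≤ i := by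
  by_contra hcon
  push_neg at hcon
  apply hW
  let f : EVec 𝔽 →ₗ[𝔽] (Fin N → 𝔽) := LinearMap.pi fun i => Finsupp.lapply (i : ℕ)
  have hker : LinearMap.ker (f.domRestrict W) = ⊥ := by
    rw [eq_bot_iff]
    rintro ⟨x, hx⟩ hker
    have hx0 : ∀ i : Fin N, x (i : ℕ) = 0 := fun i => congrFun hker i
    have hxz : x = 0 := by
      by_contra hne
      obtain ⟨i, hi, hilt⟩ := hcon x hx hne
      exact Finsupp.mem_support_iff.mp hi (hx0 ⟨i, hilt⟩)
    simp only [Submodule.mem_bot]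
    exact Subtype.ext hxz
  exact FiniteDimensional.of_injective (f.domRestrict W) (by
    intro a b hab
    apply Subtype.ext
    have hab' : (a : EVec 𝔽) - b ∈ (⊥ : Submodule 𝔽 (EVec 𝔽)) := by
      rw [eq_bot_iff] at hker
      have h2 : f a = f b := hab
      have := hker (x := a - b) (by simp [LinearMap.mem_ker, h2])
      simpa using congrArg Subtype.val ((Submodule.mem_bot 𝔽).mp this)
    exact sub_eq_zero.mp ((Submodule.mem_bot 𝔽).mp hab'))

noncomputable def pickSeq (W : Submodule 𝔽 (EVec 𝔽))
    (h : ∀ N, ∃ x, x ∈ W ∧ x ≠ 0 ∧ ∀ i ∈ x.support, N ≤ i) : ℕ → EVec 𝔽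
  | 0 => (h 0).choose
  | n + 1 => (h (bnd (pickSeq W h n))).choose

variable {W : Submodule 𝔽 (EVec 𝔽)}
  {h : ∀ N, ∃ x, x ∈ W ∧ x ≠ 0 ∧ ∀ i ∈ x.support, N ≤ i}

lemma pickSeq_mem (n : ℕ) : pickSeq W h n ∈ W := by
  cases n <;> exact (h _).choose_spec.1

lemma pickSeq_ne (n : ℕ) : pickSeq W h n ≠ 0 := by
  cases n <;> exact (h _).choose_spec.2.1

lemma pickSeq_high (n : ℕ) :
    ∀ i ∈ (pickSeq W h (n + 1)).support, bnd (pickSeq W h n) ≤ i :=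
  (h _).choose_spec.2.2

lemma bnd_mono : Monotone fun n => bnd (pickSeq W h n) := by
  apply monotone_nat_of_le_succ
  intro n
  obtain ⟨i, hi⟩ := Finsupp.support_nonempty_iff.mpr (pickSeq_ne (W := W) (h := h) (n + 1))
  exact le_of_lt (lt_of_le_of_lt (pickSeq_high n i hi) (lt_bnd hi))

lemma pickSeq_isBlockSeq : IsBlockSeq (pickSeq W h) := by
  refine ⟨pickSeq_ne, ?_⟩
  intro m n hmn i hi j hj
  obtain ⟨k, rfl⟩ : ∃ k, n = k + 1 := ⟨n - 1, by omega⟩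
  have h1 : i < bnd (pickSeq W h m) := lt_bnd hi
  have h2 : bnd (pickSeq W h m) ≤ bnd (pickSeq W h k) :=
    bnd_mono (by omega)
  exact lt_of_lt_of_le h1 (le_trans h2 (pickSeq_high k j hj))

lemma spanSeq_pickSeq_le : spanSeq (pickSeq W h) ≤ W := by
  rw [spanSeq, Submodule.span_le]
  rintro x ⟨n, rfl⟩
  exact pickSeq_mem n

lemma exists_blockSeq_le (W : Submodule 𝔽 (EVec 𝔽)) (hW : ¬ FiniteDimensional 𝔽 W) :
    ∃ D, IsBlockSeq D ∧ spanSeq D ≤ W :=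
  ⟨pickSeq W (exists_nonzero_high W hW), pickSeq_isBlockSeq, spanSeq_pickSeq_le⟩

lemma findim_bounded (W : Submodule 𝔽 (EVec 𝔽)) (hW : FiniteDimensional 𝔽 W) :
    ∃ N : ℕ, W ≤ Finsupp.supported 𝔽 𝔽 {i | i < N} := by
  have hfg : W.FG := by
    have h' : Module.Finite 𝔽 W := hW
    exact (Submodule.fg_top W).mp h'.fg_top
  obtain ⟨S, hS⟩ := hfg
  refine ⟨S.sup bnd, ?_⟩
  rw [← hS, Submodule.span_le]
  intro x hx
  rw [SetLike.mem_coe, Finsupp.mem_supported]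
  intro i hi
  exact lt_of_lt_of_le (lt_bnd hi) (Finset.le_sup (f := bnd) hx)

lemma blockSeq_support_ge {C : ℕ → EVec 𝔽} (hC : IsBlockSeq C) :
    ∀ n, ∀ j ∈ (C n).support, n ≤ j := by
  intro n
  induction n with
  | zero => intro j _; exact Nat.zero_le j
  | succ k ih =>
    intro j hj
    obtain ⟨i, hi⟩ := Finsupp.support_nonempty_iff.mpr (hC.1 k)
    exact Nat.succ_le_of_lt (lt_of_le_of_lt (ih i hi)
      (hC.2 k (k + 1) (Nat.lt_succ_self k) i hi j hj))

lemma tail_isBlockSeq {C : ℕ → EVec 𝔽} (hC : IsBlockSeq C) (N : ℕ) :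
    IsBlockSeq (tailSeq C N) :=
  ⟨fun n => hC.1 (n + N), fun m n hmn => hC.2 (m + N) (n + N) (by omega)⟩

lemma tail_span_le {C : ℕ → EVec 𝔽} (N : ℕ) : spanSeq (tailSeq C N) ≤ spanSeq C := by
  apply Submodule.span_mono
  rintro x ⟨n, rfl⟩
  exact ⟨n + N, rfl⟩

lemma tail_span_high {C : ℕ → EVec 𝔽} (hC : IsBlockSeq C) (N : ℕ) :
    spanSeq (tailSeq C N) ≤ Finsupp.supported 𝔽 𝔽 {i | N ≤ i} := by
  rw [spanSeq, Submodule.span_le]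
  rintro x ⟨n, rfl⟩
  rw [SetLike.mem_coe, Finsupp.mem_supported]
  intro i hi
  exact le_trans (Nat.le_add_left N n) (blockSeq_support_ge hC (n + N) i hi)

lemma dichotomy (C : ℕ → EVec 𝔽) (hC : IsBlockSeq C) (V : Submodule 𝔽 (EVec 𝔽)) :
    (∃ D, IsBlockSeq D ∧ spanSeq D ≤ spanSeq C ⊓ V) ∨
    (∃ D, IsBlockSeq D ∧ spanSeq D ≤ spanSeq C ∧ spanSeq D ⊓ V = ⊥) := by
  by_cases hfd : FiniteDimensional 𝔽 ↥(spanSeq C ⊓ V)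
  · right
    obtain ⟨N, hN⟩ := findim_bounded _ hfd
    refine ⟨tailSeq C N, tail_isBlockSeq hC N, tail_span_le N, ?_⟩
    rw [eq_bot_iff]
    rintro x ⟨hx1, hx2⟩
    have hhigh : ↑x.support ⊆ {i : ℕ | N ≤ i} :=
      Finsupp.mem_supported 𝔽 x |>.mp (tail_span_high hC N hx1)
    have hlow : ↑x.support ⊆ {i : ℕ | i < N} :=
      Finsupp.mem_supported 𝔽 x |>.mp (hN ⟨tail_span_le N hx1, hx2⟩)
    have : x = 0 := by
      ext i
      by_contra hne
      have hi : i ∈ x.support := Finsupp.mem_support_iff.mpr hne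
      have h1 : N ≤ i := hhigh hi
      have h2 : i < N := hlow hi
      omega
    simp [this]
  · left
    exact exists_blockSeq_le _ hfd

end Statement14Aux

/-- if `⟨A⟩ ∩ ⟨B⟩` (resp. `⟨A⟩ ∖ ⟨B⟩`) is small then it is very small;
consequently they cannot both be small. -/
theorem statement14 [Countable 𝔽] (A B : ℕ → EVec 𝔽)
    (hA : IsBlockSeq A) (hB : IsBlockSeq B) :
    (SmallSet ((spanSeq A : Set (EVec 𝔽)) ∩ (spanSeq B : Set (EVec 𝔽))) →
      VerySmallSet ((spanSeq A : Set (EVec 𝔽)) ∩ (spanSeq B : Set (EVec 𝔽)))) ∧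
    (SmallSet ((spanSeq A : Set (EVec 𝔽)) \ (spanSeq B : Set (EVec 𝔽))) →
      VerySmallSet ((spanSeq A : Set (EVec 𝔽)) \ (spanSeq B : Set (EVec 𝔽)))) ∧
    ¬ (SmallSet ((spanSeq A : Set (EVec 𝔽)) ∩ (spanSeq B : Set (EVec 𝔽))) ∧
        SmallSet ((spanSeq A : Set (EVec 𝔽)) \ (spanSeq B : Set (EVec 𝔽)))) := by
  open Statement14Aux in
  have part1 : SmallSet ((spanSeq A : Set (EVec 𝔽)) ∩ (spanSeq B : Set (EVec 𝔽))) →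
      VerySmallSet ((spanSeq A : Set (EVec 𝔽)) ∩ (spanSeq B : Set (EVec 𝔽))) := by
    intro hsmall Z hZ hbig
    obtain ⟨C, hC, hsub⟩ := hbig
    rcases dichotomy C hC (spanSeq A ⊓ spanSeq B) with ⟨D, hD, hle⟩ | ⟨D, hD, hle, hbot⟩
    · refine hsmall ⟨D, hD, fun x hx hne => ?_⟩
      obtain ⟨-, hxA, hxB⟩ : x ∈ spanSeq C ⊓ (spanSeq A ⊓ spanSeq B) := hle hx
      exact ⟨hxA, hxB⟩
    · refine hZ ⟨D, hD, fun x hx hne => ?_⟩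
      rcases hsub x (hle hx) hne with hY | hZ'
      · have hmem : x ∈ spanSeq D ⊓ (spanSeq A ⊓ spanSeq B) :=
          Submodule.mem_inf.mpr ⟨hx, Submodule.mem_inf.mpr ⟨hY.1, hY.2⟩⟩
        rw [hbot] at hmem
        exact absurd ((Submodule.mem_bot 𝔽).mp hmem) hne
      · exact hZ'
  refine ⟨part1, ?_, ?_⟩
  · intro hsmall Z hZ hbig
    obtain ⟨C, hC, hsub⟩ := hbig
    rcases dichotomy C hC (spanSeq A) with ⟨D1, hD1, hle1⟩ | ⟨D, hD, hle, hbot⟩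
    · rcases dichotomy D1 hD1 (spanSeq B) with ⟨D, hD, hle2⟩ | ⟨D, hD, hle2, hbot⟩
      · refine hZ ⟨D, hD, fun x hx hne => ?_⟩
        obtain ⟨hxD1, hxB⟩ : x ∈ spanSeq D1 ⊓ spanSeq B := hle2 hx
        obtain ⟨hxC, hxA⟩ : x ∈ spanSeq C ⊓ spanSeq A := hle1 hxD1
        rcases hsub x hxC hne with hY | hZ'
        · exact absurd hxB hY.2
        · exact hZ'
      · refine hsmall ⟨D, hD, fun x hx hne => ?_⟩
        obtain ⟨hxC, hxA⟩ : x ∈ spanSeq C ⊓ spanSeq A := hle1 (hle2 hx)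
        refine ⟨hxA, fun hxB => ?_⟩
        have hmem : x ∈ spanSeq D ⊓ spanSeq B := Submodule.mem_inf.mpr ⟨hx, hxB⟩
        rw [hbot] at hmem
        exact absurd ((Submodule.mem_bot 𝔽).mp hmem) hne
    · refine hZ ⟨D, hD, fun x hx hne => ?_⟩
      rcases hsub x (hle hx) hne with hY | hZ'
      · have hmem : x ∈ spanSeq D ⊓ spanSeq A := Submodule.mem_inf.mpr ⟨hx, hY.1⟩
        rw [hbot] at hmem
        exact absurd ((Submodule.mem_bot 𝔽).mp hmem) hne
      · exact hZ'
  · rintro ⟨h1, h2⟩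
    refine part1 h1 _ h2 ⟨A, hA, fun x hx hne => ?_⟩
    by_cases hxB : x ∈ spanSeq B
    · exact Or.inl ⟨hx, hxB⟩
    · exact Or.inr ⟨hx, hxB⟩
end
end
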